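/- arXiv:2405.13842 — 3 statements merged into one kernel-verified Lean document; each statement's English description precedes it below -/
import Mathlib

section
/- For every quasi-order Q and every ordinal α there exists a map ι from V̇_α(Q) to the transfinite sequences over Q of length < ω^{1+α} such that every ι(x) is indecomposable, and ι is simultaneously order-preserving and order-reflecting for both pairs of relations: for all x, y ∈ V̇_α(Q), x ≲ y ⟺ ι(x) ⪯ ι(y), and x ≲* y ⟺ ι(x) ⪯* ι(y). -/
open Ordinal

universe u

/-! ### Basic wqo notions -/

/-- `P` is a wqo: there is no bad sequence. -/
def IsWqo (P : Type u) [Preorder P] : Prop :=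
  ¬ ∃ f : ℕ → P, ∀ i j, i < j → ¬ f i ≤ f j

/-- `P` is well-founded as a quasi-order: no strictly descending ω-sequence. -/
def WFqo (P : Type u) [Preorder P] : Prop :=
  ¬ ∃ x : ℕ → P, ∀ i, x (i + 1) ≤ x i ∧ ¬ x i ≤ x (i + 1)

/-! ### Fronts, identifying finite subsets of ℕ with their increasing enumerations -/

/-- `σ ⊑ τ`: `σ` is an initial segment of `τ`. -/
def InitSeg (σ τ : Finset ℕ) : Prop :=
  σ ⊆ τ ∧ ∀ a ∈ σ, ∀ b ∈ τ, b ≤ a → b ∈ σ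

/-- `σ` is a (finite) initial segment of the set `X`. -/
def InitSegSet (σ : Finset ℕ) (X : Set ℕ) : Prop :=
  ↑σ ⊆ X ∧ ∀ a ∈ σ, ∀ b ∈ X, b ≤ a → b ∈ σ

/-- A front `(F, rk)`. -/
structure Front where
  F : Set (Finset ℕ)
  infinite : F.Infinite
  antichain : ∀ σ ∈ F, ∀ τ ∈ F, InitSeg σ τ → σ = τ
  covers : ∀ X : Set ℕ, X.Infinite → (X ⊆ {n | ∃ σ ∈ F, n ∈ σ}) →
    ∃ σ ∈ F, InitSegSet σ X
  rk : Finset ℕ → Ordinal.{0}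
  rk_strict : ∀ σ τ : Finset ℕ,
    (∃ ρ ∈ F, InitSeg σ ρ ∧ σ ≠ ρ) → (∃ ρ ∈ F, InitSeg τ ρ ∧ τ ≠ ρ) →
    InitSeg σ τ → σ ≠ τ → rk τ < rk σ

/-- The rank of the front is the rank of the empty sequence. -/
def Front.rank (Fr : Front) : Ordinal.{0} := Fr.rk ∅

/-- `⋃ F`. -/
def Front.union (Fr : Front) : Set ℕ := {n | ∃ σ ∈ Fr.F, n ∈ σ}

/-- `σ ◁ τ`. -/
def Tri (σ τ : Finset ℕ) : Prop :=
  ∃ (hσ : σ.Nonempty) (hτ : τ.Nonempty),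
    σ.min' hσ < τ.min' hτ ∧
    (InitSeg (σ.erase (σ.min' hσ)) τ ∨ InitSeg τ (σ.erase (σ.min' hσ)))

/-- `g` is a bad array on the front `Fr`. -/
def BadArray {P : Type u} [Preorder P] (Fr : Front) (g : Finset ℕ → P) : Prop :=
  ∀ σ ∈ Fr.F, ∀ τ ∈ Fr.F, Tri σ τ → ¬ g σ ≤ g τ

/-- `P` is an `α`-wqo. -/
def IsAlphaWqo (α : Ordinal.{0}) (P : Type u) [Preorder P] : Prop :=
  WFqo P ∧ ∀ Fr : Front, Fr.rank < α → ∀ g : Finset ℕ → P, ¬ BadArray Fr g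

/-! ### Transfinite sequences -/

/-- A transfinite sequence over `Q`: a function `|u| → Q` with `|u| > 0`. -/
structure TSeq (Q : Type u) where
  len : Ordinal.{0}
  pos : 0 < len
  toFun : {γ : Ordinal.{0} // γ < len} → Q

namespace TSeq

variable {Q : Type u}

/-- Embeddability `u ⪯ v`. -/
def Emb [Preorder Q] (u v : TSeq Q) : Prop :=
  ∃ f : {γ // γ < u.len} → {γ // γ < v.len},
    (∀ a b, a.1 < b.1 → (f a).1 < (f b).1) ∧ ∀ a, u.toFun a ≤ v.toFun (f a)

/-- Weak embeddability `u ⪯* v`. -/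
def WEmb [Preorder Q] (u v : TSeq Q) : Prop :=
  ∃ f : {γ // γ < u.len} → {γ // γ < v.len},
    (∀ a b, a.1 ≤ b.1 → (f a).1 ≤ (f b).1) ∧ ∀ a, u.toFun a ≤ v.toFun (f a)

/-- The subsegment `u↾[γ, δ)`. -/
noncomputable def seg (u : TSeq Q) (γ δ : Ordinal.{0}) (h1 : γ < δ) (h2 : δ ≤ u.len) : TSeq Q where
  len := δ - γ
  pos := by rw [Ordinal.lt_sub]; simpa using h1
  toFun := fun ζ => u.toFun ⟨γ + ζ.1, lt_of_lt_of_le (Ordinal.lt_sub.mp ζ.2) h2⟩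

/-- The tail `u↾[γ, |u|)`. -/
noncomputable def tail (u : TSeq Q) (γ : Ordinal.{0}) (h : γ < u.len) : TSeq Q :=
  u.seg γ u.len h le_rfl

/-- `u` is indecomposable: it embeds into each of its tails. -/
def Indec [Preorder Q] (u : TSeq Q) : Prop :=
  ∀ γ (h : γ < u.len), u.Emb (u.tail γ h)

/-- `u` is weakly indecomposable. -/
def WIndec [Preorder Q] (u : TSeq Q) : Prop :=
  ∀ γ (h : γ < u.len), u.WEmb (u.tail γ h)

/-- `u ⊴ v`: cofinal embeddability. -/
def CofEmb [Preorder Q] (u v : TSeq Q) : Prop :=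
  ∀ γ (h : γ < v.len), ∃ δ, ∃ h' : δ < u.len, (u.tail δ h').Emb (v.tail γ h)

/-- `u ⊴* v`: weak cofinal embeddability. -/
def WCofEmb [Preorder Q] (u v : TSeq Q) : Prop :=
  ∀ γ (h : γ < v.len), ∃ δ, ∃ h' : δ < u.len, (u.tail δ h').WEmb (v.tail γ h)

end TSeq

/-! ### The hierarchy `V̇(Q)` -/

/-- Hereditarily countable, hereditarily nonempty sets with urelements from `Q`. -/
inductive Vdot (Q : Type u) : Type u where
  | up : Q → Vdot Q
  | sup : (ℕ → Vdot Q) → Vdot Q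

namespace Vdot

variable {Q : Type u}

/-- Rank plus one for sets; `0` on urelements. -/
noncomputable def rkp : Vdot Q → Ordinal.{0}
  | .up _ => 0
  | .sup f => (⨆ n, rkp (f n)) + 1

/-- The rank of an element of `V̇(Q)` (`0` on urelements). -/
noncomputable def rk : Vdot Q → Ordinal.{0}
  | .up _ => 0
  | .sup f => ⨆ n, rkp (f n)

/-- `x` is an urelement. -/
def IsUr (x : Vdot Q) : Prop := ∃ q, x = up q

/-- Membership in `V̇_α(Q)`: urelements, and sets of rank `< α`. -/
noncomputable def memV (α : Ordinal.{0}) (x : Vdot Q) : Prop := x.IsUr ∨ x.rk < α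

/-- Auxiliary: `up p ≲ y` (equivalently `up p ≲* y`). -/
def leUp [Preorder Q] (p : Q) : Vdot Q → Prop
  | .up q => p ≤ q
  | .sup g => ∃ j, leUp p (g j)

/-- The relation `≲` on `V̇(Q)`. -/
def vle [Preorder Q] : Vdot Q → Vdot Q → Prop
  | .up p, y => leUp p y
  | .sup _, .up _ => False
  | .sup f, .sup g => ∀ i, ∃ j, vle (f i) (g j)

/-- The relation `≲*` on `V̇(Q)`. -/
def vles [Preorder Q] : Vdot Q → Vdot Q → Prop
  | .up p, y => leUp p y
  | .sup f, .up q => ∀ i, vles (f i) (up q)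
  | .sup f, .sup g => ∀ i, ∃ j, vles (f i) (g j)

/-- The support of an element of `V̇(Q)`. -/
def supp : Vdot Q → Set Q
  | .up q => {q}
  | .sup f => ⋃ n, supp (f n)

end Vdot

namespace S8

open Vdot

def ee (n : ℕ) : ℕ := padicValNat 2 (n + 1)

lemma ee_pow_mul (j M : ℕ) : ee (2 ^ j * (2 * M + 1) - 1) = j := by
  have hpos : 0 < 2 ^ j * (2 * M + 1) := by positivity
  have h : 2 ^ j * (2 * M + 1) - 1 + 1 = 2 ^ j * (2 * M + 1) := by omega
  unfold ee
  rw [h, padicValNat.mul (by positivity) (by omega), padicValNat.prime_pow,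
    padicValNat.eq_zero_of_not_dvd (by omega), add_zero]

lemma ee_exists_ge (j N : ℕ) : ∃ n, N ≤ n ∧ ee n = j := by
  refine ⟨2 ^ j * (2 * N + 1) - 1, ?_, ee_pow_mul j N⟩
  have h1 : 1 ≤ 2 ^ j := Nat.one_le_two_pow
  have h2 : 1 * (2 * N + 1) ≤ 2 ^ j * (2 * N + 1) := Nat.mul_le_mul_right _ h1
  omega

lemma ee_shift (N : ℕ) : ∃ k : ℕ → ℕ, StrictMono k ∧ N ≤ k 0 ∧ ∀ n, ee (k n) = ee n := by
  refine ⟨fun n => (n + 1) * (2 * N + 1) - 1, ?_, ?_, ?_⟩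
  · intro a b hab
    have h2 : (a + 1) * (2 * N + 1) < (b + 1) * (2 * N + 1) :=
      (Nat.mul_lt_mul_right (by omega)).2 (by omega)
    have h3 : 0 < (a + 1) * (2 * N + 1) := by positivity
    show (a + 1) * (2 * N + 1) - 1 < (b + 1) * (2 * N + 1) - 1
    omega
  · show N ≤ (0 + 1) * (2 * N + 1) - 1
    omega
  · intro n
    have hpos : 0 < (n + 1) * (2 * N + 1) := by positivity
    have h : (n + 1) * (2 * N + 1) - 1 + 1 = (n + 1) * (2 * N + 1) := by omega
    show padicValNat 2 ((n + 1) * (2 * N + 1) - 1 + 1) = ee n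
    rw [h, padicValNat.mul (by omega) (by omega),
      padicValNat.eq_zero_of_not_dvd (show ¬(2:ℕ) ∣ 2 * N + 1 by omega), add_zero]
    rfl

variable {Q : Type u}

def Pos : Vdot Q → Type
  | .up _ => PUnit
  | .sup f => (i : ℕ) × Pos (f (ee i))

def plt : (x : Vdot Q) → Pos x → Pos x → Prop
  | .up _ => fun _ _ => False
  | .sup f => Sigma.Lex (· < ·) fun i => plt (f (ee i))

def pval : (x : Vdot Q) → Pos x → Q
  | .up q, _ => q
  | .sup f, p => pval (f (ee p.1)) p.2

def posD : (x : Vdot Q) → Pos x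
  | .up _ => PUnit.unit
  | .sup f => ⟨0, posD (f (ee 0))⟩

lemma plt_up (q : Q) (a b : Pos (up q)) : plt (up q) a b ↔ False := Iff.rfl

lemma plt_sup {f : ℕ → Vdot Q} {p q : Pos (sup f)} :
    plt (sup f) p q ↔ Sigma.Lex (· < ·) (fun i => plt (f (ee i))) p q := Iff.rfl

lemma pval_sup {f : ℕ → Vdot Q} (i : ℕ) (s : Pos (f (ee i))) :
    pval (sup f) (⟨i, s⟩ : (i : ℕ) × Pos (f (ee i))) = pval (f (ee i)) s := rfl

lemma pval_up (q : Q) (a : Pos (up q)) : pval (up q) a = q := rfl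

lemma posSup_eta {f : ℕ → Vdot Q} (p : Pos (sup f)) :
    ∃ (i : ℕ) (s : Pos (f (ee i))), p = (⟨i, s⟩ : (i : ℕ) × Pos (f (ee i))) :=
  ⟨p.1, p.2, rfl⟩

lemma plt_trans : ∀ (x : Vdot Q) {a b c : Pos x}, plt x a b → plt x b c → plt x a c := by
  intro x
  induction x with
  | up q => intro a b c h _; exact h.elim
  | sup f ih =>
    intro a b c hab hbc
    rw [plt_sup] at hab hbc ⊢
    cases hab with
    | left a b h =>
      cases hbc with
      | left b c h' => exact Sigma.Lex.left _ _ (h.trans h')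
      | right b c h' => exact Sigma.Lex.left _ _ h
    | right a b h =>
      cases hbc with
      | left b c h' => exact Sigma.Lex.left _ _ h'
      | right b c h' => exact Sigma.Lex.right _ _ (ih _ h h')

lemma plt_trichot : ∀ (x : Vdot Q) (a b : Pos x), plt x a b ∨ a = b ∨ plt x b a := by
  intro x
  induction x with
  | up q => intro a b; exact Or.inr (Or.inl rfl)
  | sup f ih =>
    intro a b
    obtain ⟨i, s, rfl⟩ := posSup_eta a
    obtain ⟨j, t, rfl⟩ := posSup_eta b
    rcases lt_trichotomy i j with h | rfl | h
    · exact Or.inl (Sigma.Lex.left _ _ h)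
    · rcases ih (ee i) s t with h | rfl | h
      · exact Or.inl (Sigma.Lex.right _ _ h)
      · exact Or.inr (Or.inl rfl)
      · exact Or.inr (Or.inr (Sigma.Lex.right _ _ h))
    · exact Or.inr (Or.inr (Sigma.Lex.left _ _ h))

lemma plt_wf : ∀ x : Vdot Q, WellFounded (plt x) := by
  intro x
  induction x with
  | up q =>
    constructor; intro a; constructor; intro b h; exact h.elim
  | sup f ih =>
    have key : ∀ i, ∀ s : Pos (f (ee i)), Acc (plt (sup f)) ⟨i, s⟩ := by
      intro i
      induction i using Nat.strong_induction_on with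
      | _ i IH =>
        intro s
        refine (ih (ee i)).induction (C := fun s => Acc (plt (sup f)) ⟨i, s⟩) s ?_
        intro s hs
        constructor
        intro p hp
        obtain ⟨j, t, rfl⟩ := posSup_eta p
        replace hp := plt_sup.1 hp
        cases hp with
        | left _ _ h => exact IH j h t
        | right _ _ h => exact hs t h
    constructor
    intro p
    obtain ⟨i, s, rfl⟩ := posSup_eta p
    exact key i s

instance pltWO (x : Vdot Q) : IsWellOrder (Pos x) (plt x) where
  trichotomous := fun a b h1 h2 => ((plt_trichot x a b).resolve_left h1).resolve_right h2
  wf := plt_wf x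

/-- transport of positions along equality -/
def castPos {x y : Vdot Q} (h : x = y) (s : Pos x) : Pos y := h ▸ s

@[simp] lemma pval_castPos {x y : Vdot Q} (h : x = y) (s : Pos x) :
    pval y (castPos h s) = pval x s := by subst h; rfl

@[simp] lemma plt_castPos {x y : Vdot Q} (h : x = y) {s t : Pos x} :
    plt y (castPos h s) (castPos h t) ↔ plt x s t := by subst h; rfl

/-- Position-level indecomposability: everything can be shifted past any given position. -/
lemma pIndec (x : Vdot Q) (p : Pos x) :
    ∃ T : Pos x → Pos x, (∀ a b, plt x a b → plt x (T a) (T b)) ∧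
      (∀ a, pval x (T a) = pval x a) ∧ (∀ a, ¬ plt x (T a) p) := by
  cases x with
  | up q => exact ⟨id, fun a b h => h, fun a => rfl, fun a h => h.elim⟩
  | sup f =>
    obtain ⟨i, r, rfl⟩ := posSup_eta p
    obtain ⟨k, hk, hk0, hke⟩ := ee_shift (i + 1)
    have hcast : ∀ j, f (ee j) = f (ee (k j)) := fun j => congrArg f (hke j).symm
    refine ⟨fun a => ⟨k a.1, castPos (hcast a.1) a.2⟩, ?_, ?_, ?_⟩
    · intro a b hab
      obtain ⟨j, s, rfl⟩ := posSup_eta a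
      obtain ⟨j', s', rfl⟩ := posSup_eta b
      replace hab := plt_sup.1 hab
      apply plt_sup.2
      cases hab with
      | left _ _ h => exact Sigma.Lex.left _ _ (hk h)
      | right _ _ h => exact Sigma.Lex.right _ _ ((plt_castPos _).2 h)
    · intro a
      obtain ⟨j, s, rfl⟩ := posSup_eta a
      rw [pval_sup, pval_sup, pval_castPos]
    · intro a hlt
      obtain ⟨j, s, rfl⟩ := posSup_eta a
      replace hlt := plt_sup.1 hlt
      have hkj : i + 1 ≤ k j := le_trans hk0 (hk.monotone (Nat.zero_le j))
      have hfst : k (⟨j, s⟩ : (i : ℕ) × Pos (f (ee i))).fst = k j := rfl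
      cases hlt with
      | left _ _ h => omega
      | right _ _ h => omega


section WithOrder

variable [Preorder Q]

/-- Position-level embedding. -/
def PEmb (x y : Vdot Q) : Prop :=
  ∃ g : Pos x → Pos y, (∀ a b, plt x a b → plt y (g a) (g b)) ∧ ∀ a, pval x a ≤ pval y (g a)

/-- Position-level weak embedding. -/
def PWEmb (x y : Vdot Q) : Prop :=
  ∃ g : Pos x → Pos y, (∀ a b, plt x a b → ¬ plt y (g b) (g a)) ∧ ∀ a, pval x a ≤ pval y (g a)

end WithOrder

/-- The transfinite sequence associated to `x`. -/
noncomputable def iota (x : Vdot Q) : TSeq Q where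
  len := type (plt x)
  pos := by
    haveI : Nonempty (Pos x) := ⟨posD x⟩
    exact pos_iff_ne_zero.2 (type_ne_zero_of_nonempty _)
  toFun := fun γ => pval x (enum (plt x) ⟨γ.1, γ.2⟩)

lemma iota_len (x : Vdot Q) : (iota x).len = type (plt x) := rfl

lemma iota_toFun (x : Vdot Q) (γ : {γ : Ordinal // γ < (iota x).len}) :
    (iota x).toFun γ = pval x (enum (plt x) ⟨γ.1, γ.2⟩) := rfl

lemma iota_toFun_typein (x : Vdot Q) (a : Pos x) (h) :
    (iota x).toFun ⟨typein (plt x) a, h⟩ = pval x a := by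
  rw [iota_toFun]
  congr 1
  exact enum_typein (plt x) a

section WithOrder2

variable [Preorder Q]

lemma emb_iff (x y : Vdot Q) : (iota x).Emb (iota y) ↔ PEmb x y := by
  constructor
  · rintro ⟨F, hmono, hval⟩
    refine ⟨fun a => enum (plt y) ⟨(F ⟨typein (plt x) a, typein_lt_type _ a⟩).1,
      (F ⟨typein (plt x) a, typein_lt_type _ a⟩).2⟩, ?_, ?_⟩
    · intro a b hab
      exact (enum_lt_enum (r := plt y)).2
        (Subtype.mk_lt_mk.2 (hmono _ _ ((typein_lt_typein (plt x)).2 hab)))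
    · intro a
      have := hval ⟨typein (plt x) a, typein_lt_type _ a⟩
      exact (iota_toFun_typein x a _).symm.trans_le this
  · rintro ⟨g, hmono, hval⟩
    refine ⟨fun γ => ⟨typein (plt y) (g (enum (plt x) ⟨γ.1, γ.2⟩)), typein_lt_type _ _⟩, ?_, ?_⟩
    · intro a b hab
      exact (typein_lt_typein (plt y)).2 (hmono _ _ ((enum_lt_enum (r := plt x)).2
        (Subtype.mk_lt_mk.2 hab)))
    · intro a
      rw [iota_toFun]
      have := hval (enum (plt x) ⟨a.1, a.2⟩)
      refine le_trans (le_of_eq ?_) (le_trans this (le_of_eq ?_))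
      · rfl
      · congr 1
        exact (enum_typein (plt y) _).symm

lemma wemb_iff (x y : Vdot Q) : (iota x).WEmb (iota y) ↔ PWEmb x y := by
  constructor
  · rintro ⟨F, hmono, hval⟩
    refine ⟨fun a => enum (plt y) ⟨(F ⟨typein (plt x) a, typein_lt_type _ a⟩).1,
      (F ⟨typein (plt x) a, typein_lt_type _ a⟩).2⟩, ?_, ?_⟩
    · intro a b hab hlt
      rw [enum_lt_enum (r := plt y)] at hlt
      have hle := hmono ⟨typein (plt x) a, typein_lt_type _ a⟩
        ⟨typein (plt x) b, typein_lt_type _ b⟩ (le_of_lt ((typein_lt_typein (plt x)).2 hab))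
      exact absurd hle (not_le_of_gt hlt)
    · intro a
      have := hval ⟨typein (plt x) a, typein_lt_type _ a⟩
      exact (iota_toFun_typein x a _).symm.trans_le this
  · rintro ⟨g, hmono, hval⟩
    refine ⟨fun γ => ⟨typein (plt y) (g (enum (plt x) ⟨γ.1, γ.2⟩)), typein_lt_type _ _⟩, ?_, ?_⟩
    · intro a b hab
      rcases eq_or_lt_of_le hab with heq | hlt
      · have hab' : a = b := Subtype.ext heq
        subst hab'
        exact le_rfl
      · have hplt : plt x (enum (plt x) ⟨a.1, a.2⟩) (enum (plt x) ⟨b.1, b.2⟩) :=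
          (enum_lt_enum (r := plt x)).2 (Subtype.mk_lt_mk.2 hlt)
        exact (typein_le_typein (plt y)).2 (hmono _ _ hplt)
    · intro a
      rw [iota_toFun]
      have := hval (enum (plt x) ⟨a.1, a.2⟩)
      refine le_trans this (le_of_eq ?_)
      congr 1
      exact (enum_typein (plt y) _).symm

end WithOrder2

lemma iota_indec [Preorder Q] (x : Vdot Q) : (iota x).Indec := by
  intro γ hγ
  obtain ⟨T, hT1, hT2, hT3⟩ := pIndec x (enum (plt x) ⟨γ, hγ⟩)
  have hγle : ∀ a : Pos x, γ ≤ typein (plt x) (T a) := by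
    intro a
    have := (typein_le_typein (plt x)).2 (hT3 a)
    exact (typein_enum (plt x) hγ).symm.trans_le this
  have hlt : ∀ δ : {δ : Ordinal // δ < (iota x).len},
      typein (plt x) (T (enum (plt x) ⟨δ.1, δ.2⟩)) - γ < ((iota x).tail γ hγ).len := by
    intro δ
    rw [TSeq.tail, TSeq.seg, Ordinal.lt_sub,
      Ordinal.add_sub_cancel_of_le (hγle _)]
    exact typein_lt_type _ _
  refine ⟨fun δ => ⟨typein (plt x) (T (enum (plt x) ⟨δ.1, δ.2⟩)) - γ, hlt δ⟩, ?_, ?_⟩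
  · intro a b hab
    have h1 : plt x (T (enum (plt x) ⟨a.1, a.2⟩)) (T (enum (plt x) ⟨b.1, b.2⟩)) :=
      hT1 _ _ ((enum_lt_enum (r := plt x)).2 (Subtype.mk_lt_mk.2 hab))
    have h2 := (typein_lt_typein (plt x)).2 h1
    have ha := hγle (enum (plt x) ⟨a.1, a.2⟩)
    have hb := hγle (enum (plt x) ⟨b.1, b.2⟩)
    rw [← add_lt_add_iff_left γ, Ordinal.add_sub_cancel_of_le ha,
      Ordinal.add_sub_cancel_of_le hb]
    exact h2
  · intro a
    show (iota x).toFun a ≤ (iota x).toFun ⟨γ + _, _⟩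
    dsimp only
    set t := typein (plt x) (T (enum (plt x) ⟨a.1, a.2⟩)) with ht
    have harw : γ + (t - γ) = t := Ordinal.add_sub_cancel_of_le (hγle _)
    have h4 : ∀ (h1 : γ + (t - γ) < (iota x).len),
        (iota x).toFun ⟨γ + (t - γ), h1⟩ = pval x (T (enum (plt x) ⟨a.1, a.2⟩)) := by
      intro h1
      have h3 : (⟨γ + (t - γ), h1⟩ : {o : Ordinal // o < (iota x).len}) =
          ⟨t, harw ▸ h1⟩ := Subtype.ext harw
      rw [h3]
      exact iota_toFun_typein x _ _
    rw [h4]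
    exact le_of_eq ((iota_toFun x a).trans (hT2 _).symm)

lemma plt_fst_le {g : ℕ → Vdot Q} {p q : Pos (sup g)} (h : plt (sup g) p q) : p.1 ≤ q.1 := by
  obtain ⟨i, s, rfl⟩ := posSup_eta p
  obtain ⟨j, t, rfl⟩ := posSup_eta q
  replace h := plt_sup.1 h
  cases h with
  | left _ _ h => exact le_of_lt h
  | right _ _ h => exact le_rfl

lemma fst_lt_plt {g : ℕ → Vdot Q} {p q : Pos (sup g)} (h : p.1 < q.1) : plt (sup g) p q := by
  obtain ⟨i, s, rfl⟩ := posSup_eta p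
  obtain ⟨j, t, rfl⟩ := posSup_eta q
  exact Sigma.Lex.left _ _ h

lemma plt_mk_same {g : ℕ → Vdot Q} {k : ℕ} {u v : Pos (g (ee k))} :
    plt (sup g) ⟨k, u⟩ ⟨k, v⟩ ↔ plt (g (ee k)) u v := by
  refine Iff.trans plt_sup ?_
  constructor
  · intro h
    cases h with
    | left _ _ h => exact absurd h (lt_irrefl _)
    | right _ _ h => exact h
  · intro h
    exact @Sigma.Lex.right ℕ (fun i => Pos (g (ee i))) (· < ·) (fun i => plt (g (ee i))) k u v h

lemma pval_sup_fst {g : ℕ → Vdot Q} (p : Pos (sup g)) {J : ℕ} (h : p.1 = J) :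
    pval (sup g) p = pval (g (ee J)) (castPos (congrArg (fun m => g (ee m)) h) p.2) := by
  obtain ⟨i, s, rfl⟩ := posSup_eta p
  have hi : i = J := h
  subst hi
  rfl

lemma plt_snd_iff {g : ℕ → Vdot Q} {p q : Pos (sup g)} {J : ℕ} (hp : p.1 = J) (hq : q.1 = J) :
    plt (sup g) p q ↔ plt (g (ee J)) (castPos (congrArg (fun m => g (ee m)) hp) p.2)
      (castPos (congrArg (fun m => g (ee m)) hq) q.2) := by
  obtain ⟨i, s, rfl⟩ := posSup_eta p
  obtain ⟨i', t, rfl⟩ := posSup_eta q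
  have hi : i = J := hp
  subst hi
  have hi' : i' = i := hq
  subst hi'
  exact plt_mk_same

section MainCorrespondence

variable [Preorder Q]

lemma leUp_iff (p : Q) : ∀ y : Vdot Q, leUp p y ↔ ∃ r : Pos y, p ≤ pval y r := by
  intro y
  induction y with
  | up q => exact ⟨fun h => ⟨PUnit.unit, h⟩, fun ⟨r, h⟩ => h⟩
  | sup g ih =>
    constructor
    · intro h
      obtain ⟨j, hj⟩ := h
      obtain ⟨i, -, hi⟩ := ee_exists_ge j 0
      obtain ⟨r, hr⟩ := (ih j).1 hj
      refine ⟨⟨i, castPos (congrArg g hi.symm) r⟩, ?_⟩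
      rw [pval_sup, pval_castPos]
      exact hr
    · rintro ⟨pr, hpr⟩
      obtain ⟨i, s, rfl⟩ := posSup_eta pr
      exact ⟨ee i, (ih (ee i)).2 ⟨s, by rwa [pval_sup] at hpr⟩⟩

lemma vles_up_iff (q : Q) : ∀ z : Vdot Q, vles z (up q) ↔ ∀ s : Pos z, pval z s ≤ q := by
  intro z
  induction z with
  | up p => exact ⟨fun h s => h, fun h => h PUnit.unit⟩
  | sup f ih =>
    constructor
    · intro h pr
      obtain ⟨i, s, rfl⟩ := posSup_eta pr
      rw [pval_sup]
      exact (ih (ee i)).1 (h (ee i)) s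
    · intro h
      show ∀ i, vles (f i) (up q)
      intro i
      obtain ⟨n, -, hn⟩ := ee_exists_ge i 0
      refine (ih i).2 fun s => ?_
      have h2 := h ⟨n, castPos (congrArg f hn.symm) s⟩
      rwa [pval_sup, pval_castPos] at h2

lemma pemb_up_iff (p : Q) (y : Vdot Q) : PEmb (up p) y ↔ ∃ r : Pos y, p ≤ pval y r :=
  ⟨fun ⟨g, _, hv⟩ => ⟨g PUnit.unit, hv PUnit.unit⟩,
   fun ⟨r, hr⟩ => ⟨fun _ => r, fun _ _ h => h.elim, fun _ => hr⟩⟩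

lemma pwemb_up_iff (p : Q) (y : Vdot Q) : PWEmb (up p) y ↔ ∃ r : Pos y, p ≤ pval y r :=
  ⟨fun ⟨g, _, hv⟩ => ⟨g PUnit.unit, hv PUnit.unit⟩,
   fun ⟨r, hr⟩ => ⟨fun _ => r, fun _ _ h => h.elim, fun _ => hr⟩⟩

end MainCorrespondence

noncomputable def eeφ (J : ℕ → ℕ) : ℕ → ℕ
  | 0 => (ee_exists_ge (J 0) 0).choose
  | (i + 1) => (ee_exists_ge (J (i + 1)) (eeφ J i + 1)).choose

lemma eeφ_strictMono (J : ℕ → ℕ) : StrictMono (eeφ J) := by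
  refine strictMono_nat_of_lt_succ fun i => ?_
  have h := (ee_exists_ge (J (i + 1)) (eeφ J i + 1)).choose_spec.1
  show eeφ J i < (ee_exists_ge (J (i + 1)) (eeφ J i + 1)).choose
  omega

lemma eeφ_spec (J : ℕ → ℕ) (i : ℕ) : ee (eeφ J i) = J i := by
  cases i with
  | zero => exact (ee_exists_ge (J 0) 0).choose_spec.2
  | succ i => exact (ee_exists_ge (J (i + 1)) (eeφ J i + 1)).choose_spec.2

section KeyLemmas

variable [Preorder Q]

lemma keyD (J : ℕ) : ∀ (z : Vdot Q) (g : ℕ → Vdot Q) (H : Pos z → Pos (sup g)),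
    (∀ a b, plt z a b → plt (sup g) (H a) (H b)) →
    (∀ a, pval z a ≤ pval (sup g) (H a)) →
    (∀ a, (H a).1 ≤ J) → ∃ j, PEmb z (g j) := by
  induction J using Nat.strong_induction_on with
  | _ J IH =>
    intro z g H hm hv hb
    by_cases hex : ∃ a0, (H a0).1 = J
    · obtain ⟨a0, ha0⟩ := hex
      obtain ⟨T, hT1, hT2, hT3⟩ := pIndec z a0
      have hfst : ∀ a, (H (T a)).1 = J := by
        intro a
        rcases plt_trichot z (T a) a0 with h | h | h
        · exact absurd h (hT3 a)
        · rw [h]; exact ha0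
        · have h1 := plt_fst_le (hm _ _ h)
          have h2 := hb (T a)
          omega
      refine ⟨ee J, fun a =>
        castPos (congrArg (fun m => g (ee m)) (hfst a)) (H (T a)).2, ?_, ?_⟩
      · intro a b hab
        exact (plt_snd_iff (hfst a) (hfst b)).1 (hm _ _ (hT1 _ _ hab))
      · intro a
        calc pval z a = pval z (T a) := (hT2 a).symm
          _ ≤ pval (sup g) (H (T a)) := hv _
          _ = _ := pval_sup_fst _ (hfst a)
    · push_neg at hex
      cases J with
      | zero => exact absurd (Nat.le_zero.mp (hb (posD z))) (hex (posD z))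
      | succ J' =>
        refine IH J' (Nat.lt_succ_self _) z g H hm hv fun a => ?_
        have h1 := hb a
        have h2 := hex a
        omega

lemma keyDW (J : ℕ) : ∀ (z : Vdot Q) (g : ℕ → Vdot Q) (H : Pos z → Pos (sup g)),
    (∀ a b, plt z a b → ¬ plt (sup g) (H b) (H a)) →
    (∀ a, pval z a ≤ pval (sup g) (H a)) →
    (∀ a, (H a).1 ≤ J) → ∃ j, PWEmb z (g j) := by
  induction J using Nat.strong_induction_on with
  | _ J IH =>
    intro z g H hm hv hb
    by_cases hex : ∃ a0, (H a0).1 = J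
    · obtain ⟨a0, ha0⟩ := hex
      obtain ⟨T, hT1, hT2, hT3⟩ := pIndec z a0
      have hfst : ∀ a, (H (T a)).1 = J := by
        intro a
        rcases plt_trichot z (T a) a0 with h | h | h
        · exact absurd h (hT3 a)
        · rw [h]; exact ha0
        · have h1 : ¬ (H (T a)).1 < (H a0).1 := fun hc => hm _ _ h (fst_lt_plt hc)
          have h2 := hb (T a)
          omega
      refine ⟨ee J, fun a =>
        castPos (congrArg (fun m => g (ee m)) (hfst a)) (H (T a)).2, ?_, ?_⟩
      · intro a b hab hc
        exact hm _ _ (hT1 _ _ hab) ((plt_snd_iff (hfst b) (hfst a)).2 hc)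
      · intro a
        calc pval z a = pval z (T a) := (hT2 a).symm
          _ ≤ pval (sup g) (H (T a)) := hv _
          _ = _ := pval_sup_fst _ (hfst a)
    · push_neg at hex
      cases J with
      | zero => exact absurd (Nat.le_zero.mp (hb (posD z))) (hex (posD z))
      | succ J' =>
        refine IH J' (Nat.lt_succ_self _) z g H hm hv fun a => ?_
        have h1 := hb a
        have h2 := hex a
        omega

end KeyLemmas

theorem main [Preorder Q] : ∀ x y : Vdot Q,
    (vle x y ↔ PEmb x y) ∧ (vles x y ↔ PWEmb x y) := by
  intro x
  induction x with
  | up p =>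
    intro y
    constructor
    · show leUp p y ↔ _
      rw [pemb_up_iff, leUp_iff]
    · show leUp p y ↔ _
      rw [pwemb_up_iff, leUp_iff]
  | sup f ihf =>
    intro y
    cases y with
    | up q =>
      constructor
      · constructor
        · intro h; exact h.elim
        · rintro ⟨g, hm, -⟩
          exfalso
          have h1 : plt (sup f) ⟨0, posD (f (ee 0))⟩ ⟨1, posD (f (ee 1))⟩ :=
            Sigma.Lex.left _ _ Nat.zero_lt_one
          exact hm _ _ h1
      · rw [vles_up_iff]
        constructor
        · intro h
          exact ⟨fun _ => PUnit.unit, fun _ _ _ hc => hc, fun a => h a⟩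
        · rintro ⟨g, -, hv⟩ s
          exact hv s
    | sup g =>
      constructor
      · show (∀ i, ∃ j, vle (f i) (g j)) ↔ _
        constructor
        · intro h
          choose jf hjf using fun i => h (ee i)
          have hpe : ∀ i, PEmb (f (ee i)) (g (jf i)) := fun i => (ihf (ee i) (g (jf i))).1.mp (hjf i)
          choose G hGm hGv using hpe
          set φ : ℕ → ℕ := eeφ jf with hφdef
          have hφs : StrictMono φ := eeφ_strictMono jf
          have hφe : ∀ i, ee (φ i) = jf i := eeφ_spec jf
          refine ⟨fun p => ⟨φ p.1, castPos (congrArg g (hφe p.1).symm) (G p.1 p.2)⟩, ?_, ?_⟩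
          · intro a b hab
            obtain ⟨i, s, rfl⟩ := posSup_eta a
            obtain ⟨i', t, rfl⟩ := posSup_eta b
            replace hab := plt_sup.1 hab
            cases hab with
            | left _ _ hlt => exact fst_lt_plt (hφs hlt)
            | right _ _ hlt => exact plt_mk_same.2 ((plt_castPos _).2 (hGm _ _ _ hlt))
          · intro a
            obtain ⟨i, s, rfl⟩ := posSup_eta a
            rw [pval_sup, pval_sup, pval_castPos]
            exact hGv i s
        · rintro ⟨G, hm, hv⟩ n
          obtain ⟨i, -, hi⟩ := ee_exists_ge n 0
          set c : Pos (f n) → Pos (f (ee i)) := castPos (congrArg f hi.symm) with hc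
          set H : Pos (f n) → Pos (sup g) := fun s => G ⟨i, c s⟩ with hH
          have hb : ∀ s, (H s).1 ≤ (G ⟨i + 1, posD (f (ee (i + 1)))⟩).1 := by
            intro s
            exact plt_fst_le (hm _ _ (Sigma.Lex.left _ _ (Nat.lt_succ_self i)))
          have hm' : ∀ s t, plt (f n) s t → plt (sup g) (H s) (H t) := by
            intro s t hst
            exact hm _ _ (plt_mk_same.2 ((plt_castPos _).2 hst))
          have hv' : ∀ s, pval (f n) s ≤ pval (sup g) (H s) := by
            intro s
            have h1 := hv ⟨i, c s⟩
            rwa [pval_sup, hc, pval_castPos] at h1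
          obtain ⟨j, hj⟩ := keyD _ (f n) g H hm' hv' hb
          exact ⟨j, (ihf n (g j)).1.mpr hj⟩
      · show (∀ i, ∃ j, vles (f i) (g j)) ↔ _
        constructor
        · intro h
          choose jf hjf using fun i => h (ee i)
          have hpe : ∀ i, PWEmb (f (ee i)) (g (jf i)) :=
            fun i => (ihf (ee i) (g (jf i))).2.mp (hjf i)
          choose G hGm hGv using hpe
          set φ : ℕ → ℕ := eeφ jf with hφdef
          have hφs : StrictMono φ := eeφ_strictMono jf
          have hφe : ∀ i, ee (φ i) = jf i := eeφ_spec jf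
          refine ⟨fun p => ⟨φ p.1, castPos (congrArg g (hφe p.1).symm) (G p.1 p.2)⟩, ?_, ?_⟩
          · intro a b hab hcon
            obtain ⟨i, s, rfl⟩ := posSup_eta a
            obtain ⟨i', t, rfl⟩ := posSup_eta b
            replace hab := plt_sup.1 hab
            cases hab with
            | left _ _ hlt =>
              have := plt_fst_le hcon
              exact absurd this (not_le_of_gt (hφs hlt))
            | right _ _ hlt =>
              exact hGm _ _ _ hlt ((plt_castPos _).1 (plt_mk_same.1 hcon))
          · intro a
            obtain ⟨i, s, rfl⟩ := posSup_eta a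
            rw [pval_sup, pval_sup, pval_castPos]
            exact hGv i s
        · rintro ⟨G, hm, hv⟩ n
          obtain ⟨i, -, hi⟩ := ee_exists_ge n 0
          set c : Pos (f n) → Pos (f (ee i)) := castPos (congrArg f hi.symm) with hc
          set H : Pos (f n) → Pos (sup g) := fun s => G ⟨i, c s⟩ with hH
          have hb : ∀ s, (H s).1 ≤ (G ⟨i + 1, posD (f (ee (i + 1)))⟩).1 := by
            intro s
            have h1 := hm (⟨i, c s⟩ : (i : ℕ) × Pos (f (ee i)))
              ⟨i + 1, posD (f (ee (i + 1)))⟩ (Sigma.Lex.left _ _ (Nat.lt_succ_self i))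
            by_contra hcon
            push_neg at hcon
            exact h1 (fst_lt_plt hcon)
          have hm' : ∀ s t, plt (f n) s t → ¬ plt (sup g) (H t) (H s) := by
            intro s t hst
            exact hm _ _ (plt_mk_same.2 ((plt_castPos _).2 hst))
          have hv' : ∀ s, pval (f n) s ≤ pval (sup g) (H s) := by
            intro s
            have h1 := hv ⟨i, c s⟩
            rwa [pval_sup, hc, pval_castPos] at h1
          obtain ⟨j, hj⟩ := keyDW _ (f n) g H hm' hv' hb
          exact ⟨j, (ihf n (g j)).2.mpr hj⟩

lemma type_up (q : Q) : type (plt (up q)) = 1 := by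
  haveI : Nonempty (Pos (up q)) := ⟨PUnit.unit⟩
  haveI : Subsingleton (Pos (up q)) := ⟨fun _ _ => rfl⟩
  exact type_eq_one_of_unique _

lemma rk_up (q : Q) : rk (up q) = 0 := rfl

lemma rkp_le_rk_sup (f : ℕ → Vdot Q) (n : ℕ) : rkp (f n) ≤ rk (sup f) := by
  show rkp (f n) ≤ ⨆ n, rkp (f n)
  exact Ordinal.le_iSup _ n

lemma one_lt_opow_omega0 (β : Ordinal) : 1 < (ω : Ordinal.{0}) ^ (1 + β) := by
  calc (1 : Ordinal) < ω := one_lt_omega0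
    _ = ω ^ (1 : Ordinal) := (opow_one _).symm
    _ ≤ ω ^ (1 + β) := opow_le_opow_right omega0_pos le_self_add

lemma block_lt (f : ℕ → Vdot Q) (m : ℕ) (IH : type (plt (f m)) ≤ ω ^ (1 + rk (f m))) :
    type (plt (f m)) < ω ^ (1 + rk (sup f)) := by
  have hle := rkp_le_rk_sup f m
  cases hfm : f m with
  | up q =>
    rw [type_up]
    exact one_lt_opow_omega0 _
  | sup g =>
    rw [hfm] at hle
    have h1 : rk (sup g) + 1 = rkp (sup g) := rfl
    have h2 : rk (sup g) + 1 ≤ rk (sup f) := h1.le.trans hle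
    have h3 : rk (sup g) < rk (sup f) := by
      rw [Ordinal.add_one_eq_succ] at h2
      exact (Order.succ_le_iff).1 h2
    rw [hfm] at IH
    refine IH.trans_lt ?_
    rw [opow_lt_opow_iff_right one_lt_omega0]
    exact (add_lt_add_iff_left 1).2 h3

lemma type_le : ∀ x : Vdot Q, type (plt x) ≤ ω ^ (1 + rk x) := by
  intro x
  induction x with
  | up q =>
    rw [type_up]
    exact (one_lt_opow_omega0 _).le
  | sup f ih =>
    set B : Ordinal := ω ^ (1 + rk (sup f)) with hBdef
    have hB : Principal (· + ·) B := principal_add_omega0_opow _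
    have hBpos : (0 : Ordinal) < B := opow_pos _ omega0_pos
    have hblock : ∀ i, type (plt (f (ee i))) < B := fun i => block_lt f (ee i) (ih (ee i))
    set S : ℕ → Ordinal := fun i =>
      Nat.rec 0 (fun i prev => prev + type (plt (f (ee i)))) i with hSdef
    have hSsucc : ∀ i, S (i + 1) = S i + type (plt (f (ee i))) := fun i => rfl
    have hSlt : ∀ i, S i < B := by
      intro i
      induction i with
      | zero => exact hBpos
      | succ i ihi => rw [hSsucc]; exact hB ihi (hblock i)
    have hSmono : ∀ i j, i < j → S i + type (plt (f (ee i))) ≤ S j := by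
      intro i j hij
      induction j with
      | zero => omega
      | succ j ihj =>
        rcases Nat.lt_succ_iff_lt_or_eq.mp hij with h | h
        · exact (ihj h).trans (by rw [hSsucc]; exact le_self_add)
        · subst h; rw [hSsucc]
    have hmap : ∀ p : Pos (sup f), S p.1 + typein (plt (f (ee p.1))) p.2 < B := by
      intro p
      exact hB (hSlt _) ((typein_lt_type _ _).trans (hblock _))
    set emb : Pos (sup f) → B.ToType :=
      fun p => ToType.mk ⟨S p.1 + typein (plt (f (ee p.1))) p.2, hmap p⟩ with hembdef
    have hemb : ∀ p q, plt (sup f) p q → emb p < emb q := by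
      intro p q h
      rw [hembdef]
      dsimp only
      rw [OrderIso.lt_iff_lt]
      refine Subtype.mk_lt_mk.2 ?_
      obtain ⟨i, s, rfl⟩ := posSup_eta p
      obtain ⟨j, t, rfl⟩ := posSup_eta q
      replace h := plt_sup.1 h
      cases h with
      | left _ _ h =>
        calc S i + typein (plt (f (ee i))) s < S i + type (plt (f (ee i))) :=
              (add_lt_add_iff_left _).2 (typein_lt_type _ _)
          _ ≤ S j := hSmono i j h
          _ ≤ S j + typein (plt (f (ee j))) t := le_self_add
      | right _ _ h =>
        exact (add_lt_add_iff_left _).2 ((typein_lt_typein _).2 h)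
    haveI : IsWellOrder B.ToType (· < ·) := isWellOrder_lt
    have hfin : type (plt (sup f)) ≤ type ((· < ·) : B.ToType → B.ToType → Prop) :=
      (RelEmbedding.ofMonotone emb hemb).ordinal_type_le
    rwa [type_toType] at hfin

lemma len_lt [Preorder Q] (α : Ordinal.{0}) (x : Vdot Q) (hx : memV α x) :
    (iota x).len < ω ^ (1 + α) := by
  rw [iota_len]
  rcases hx with ⟨q, rfl⟩ | h
  · rw [type_up]
    exact one_lt_opow_omega0 _
  · refine (type_le x).trans_lt ?_
    rw [opow_lt_opow_iff_right one_lt_omega0]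
    exact (add_lt_add_iff_left 1).2 h

end S8

theorem statement8 {Q : Type u} [Preorder Q] (α : Ordinal.{0}) :
    ∃ ι : {x : Vdot Q // x.memV α} → TSeq Q,
      (∀ x, (ι x).len < ω ^ (1 + α)) ∧
      (∀ x, (ι x).Indec) ∧
      (∀ x y, Vdot.vle x.1 y.1 ↔ (ι x).Emb (ι y)) ∧
      (∀ x y, Vdot.vles x.1 y.1 ↔ (ι x).WEmb (ι y)) := by
  refine ⟨fun x => S8.iota x.1, ?_, ?_, ?_, ?_⟩
  · intro x
    exact S8.len_lt α x.1 x.2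
  · intro x
    exact S8.iota_indec x.1
  · intro x y
    rw [S8.emb_iff]
    exact (S8.main x.1 y.1).1
  · intro x y
    rw [S8.wemb_iff]
    exact (S8.main x.1 y.1).2
end

section
/- Let Q be a quasi-order and α an ordinal. If (V̇_α(Q), ≲*) is well-founded, then Q is an α-wqo. Conversely, if α is not a limit ordinal (i.e., α is zero or a successor) and Q is an α-wqo, then (V̇_α(Q), ≲*) is well-founded. -/
open Ordinal

universe u

/-! ### Core lemmas about `vles` -/

namespace Vdot

variable {Q : Type u} [Preorder Q]

/-- Membership: `w` is a member of `v` (for `up q`, the only "member" is itself). -/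
def IsMem (w v : Vdot Q) : Prop :=
  match v with
  | .up q => w = up q
  | .sup g => ∃ j, w = g j

/-- `u` fails to `≲*`-embed into every member of `v`. -/
def NotLeM (u v : Vdot Q) : Prop := ∀ w, IsMem w v → ¬ vles u w

theorem leUp_mono {p q : Q} (h : p ≤ q) : ∀ {v : Vdot Q}, leUp q v → leUp p v
  | .up _, h2 => le_trans h h2
  | .sup _, ⟨j, hj⟩ => ⟨j, leUp_mono h hj⟩

theorem vles_up_mono {q r : Q} (hqr : q ≤ r) : ∀ {u : Vdot Q}, vles u (up q) → vles u (up r)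
  | .up _, h => le_trans h hqr
  | .sup _, h => fun i => vles_up_mono hqr (h i)

theorem vles_refl : ∀ u : Vdot Q, vles u u
  | .up p => le_refl p
  | .sup f => fun i => ⟨i, vles_refl (f i)⟩

theorem vles_sup_of_vles : ∀ {v : Vdot Q} (g : ℕ → Vdot Q) (j : ℕ), g j = v → ∀ {u : Vdot Q},
    vles u v → vles u (sup g)
  | .up _, _, j, hj, .up _, h => ⟨j, hj ▸ h⟩
  | .sup _, _, j, hj, .up _, h => ⟨j, hj ▸ h⟩
  | .up _, _, j, hj, .sup _, h => fun i => ⟨j, hj ▸ h i⟩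
  | .sup t, _, j, hj, .sup f, h => fun i => by
      obtain ⟨l, hl⟩ := h i
      exact ⟨j, hj ▸ vles_sup_of_vles t l rfl hl⟩

/-- anything `≲*` a member of `sup g` is `≲* sup g`. -/
theorem vles_mem {g : ℕ → Vdot Q} {j : ℕ} {u : Vdot Q} (h : vles u (g j)) : vles u (sup g) :=
  vles_sup_of_vles g j rfl h

theorem vles_trans_up {q : Q} : ∀ {w : Vdot Q}, leUp q w → ∀ {u : Vdot Q},
    vles u (up q) → vles u w
  | .up _, hqr, _, h => vles_up_mono hqr h
  | .sup _, ⟨_, hj⟩, _, h => vles_mem (vles_trans_up hj h)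

theorem vles_trans : ∀ {v u w : Vdot Q}, vles u v → vles v w → vles u w
  | .up _, _, _, h1, h2 => vles_trans_up h2 h1
  | .sup f, .up p, .up r, h1, h2 => by
      obtain ⟨i, hi⟩ := h1
      exact vles_trans (v := f i) hi (h2 i)
  | .sup f, .up p, .sup g, h1, h2 => by
      obtain ⟨i, hi⟩ := h1
      obtain ⟨j, hj⟩ := h2 i
      exact vles_mem (vles_trans (v := f i) hi hj)
  | .sup f, .sup t, .up r, h1, h2 => fun k => by
      obtain ⟨i, hi⟩ := h1 k
      exact vles_trans (v := f i) hi (h2 i)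
  | .sup f, .sup t, .sup g, h1, h2 => fun k => by
      obtain ⟨i, hi⟩ := h1 k
      obtain ⟨j, hj⟩ := h2 i
      exact ⟨j, vles_trans (v := f i) hi hj⟩

theorem exists_notLeM {f : ℕ → Vdot Q} {v : Vdot Q} (h : ¬ vles (sup f) v) :
    ∃ i, NotLeM (f i) v := by
  cases v with
  | up q =>
      have h' : ¬ ∀ i, vles (f i) (up q) := h
      push_neg at h'
      obtain ⟨i, hi⟩ := h'
      exact ⟨i, fun w hw => by rw [show w = up q from hw]; exact hi⟩
  | sup g =>
      have h' : ¬ ∀ i, ∃ j, vles (f i) (g j) := h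
      push_neg at h'
      obtain ⟨i, hi⟩ := h'
      exact ⟨i, fun w hw => by obtain ⟨j, rfl⟩ := hw; exact hi j⟩

theorem notLeM_of_not_vles {u v : Vdot Q} (h : ¬ vles u v) : NotLeM u v := by
  intro w hw hc
  cases v with
  | up q => rw [show w = up q from hw] at hc; exact h hc
  | sup g => obtain ⟨j, rfl⟩ := hw; exact h (vles_mem hc)

theorem vles_of_isMem {w v : Vdot Q} (h : IsMem w v) : vles w v := by
  cases v with
  | up q => rw [show w = up q from h]; exact vles_refl _
  | sup g => obtain ⟨j, rfl⟩ := h; exact vles_mem (vles_refl _)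

theorem vles_up_up_iff {p q : Q} : vles (up p) (up q) ↔ p ≤ q := Iff.rfl

/-! ### Rank lemmas -/

theorem rkp_up {q : Q} : (up q : Vdot Q).rkp = 0 := rfl
theorem rk_up {q : Q} : (up q : Vdot Q).rk = 0 := rfl
theorem rkp_sup {f : ℕ → Vdot Q} : (sup f).rkp = (⨆ n, (f n).rkp) + 1 := rfl
theorem rk_sup {f : ℕ → Vdot Q} : (sup f).rk = ⨆ n, (f n).rkp := rfl

theorem rkp_le_of_isMem {w : Vdot Q} {f : ℕ → Vdot Q} (h : IsMem w (sup f)) :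
    w.rkp ≤ (sup f).rk := by
  obtain ⟨j, rfl⟩ := h
  rw [rk_sup]
  exact Ordinal.le_iSup (fun n => (f n).rkp) j

theorem rk_lt_rkp_sup {f : ℕ → Vdot Q} : (sup f : Vdot Q).rk < (sup f).rkp := by
  rw [rk_sup, rkp_sup]; exact lt_add_one _

theorem rk_le_rkp : ∀ (v : Vdot Q), v.rk ≤ v.rkp
  | .up _ => le_refl _
  | .sup f => le_of_lt rk_lt_rkp_sup

/-- Extract an underlying `Q`-element from any `Vdot Q`. -/
def witness : Vdot Q → Q
  | .up q => q
  | .sup f => witness (f 0)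

end Vdot

/-! ### Lemmas about initial segments of finite sets -/

section InitSegLemmas

theorem initSeg_refl (σ : Finset ℕ) : InitSeg σ σ :=
  ⟨Finset.Subset.refl σ, fun _ _ b hb _ => hb⟩

theorem initSeg_trans {σ τ ρ : Finset ℕ} (h1 : InitSeg σ τ) (h2 : InitSeg τ ρ) : InitSeg σ ρ :=
  ⟨h1.1.trans h2.1, fun a ha b hb hba => h1.2 a ha b (h2.2 a (h1.1 ha) b hb hba) hba⟩

theorem initSeg_antisymm {σ τ : Finset ℕ} (h1 : InitSeg σ τ) (h2 : InitSeg τ σ) : σ = τ :=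
  Finset.Subset.antisymm h1.1 h2.1

theorem initSeg_empty (τ : Finset ℕ) : InitSeg ∅ τ :=
  ⟨Finset.empty_subset τ, fun a ha => absurd ha (Finset.notMem_empty a)⟩

theorem initSeg_insert {σ : Finset ℕ} {m : ℕ} (h : ∀ a ∈ σ, a < m) :
    InitSeg σ (insert m σ) := by
  refine ⟨Finset.subset_insert m σ, fun a ha b hb hba => ?_⟩
  rcases Finset.mem_insert.mp hb with rfl | hb'
  · exact absurd (lt_of_lt_of_le (h a ha) hba) (lt_irrefl _)
  · exact hb'

theorem initSeg_of_subset {σ τ X : Finset ℕ} (hsub : σ ⊆ τ) (h1 : InitSeg σ X)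
    (h2 : InitSeg τ X) : InitSeg σ τ :=
  ⟨hsub, fun a ha b hb hba => h1.2 a ha b (h2.1 hb) hba⟩

theorem initSeg_total {σ τ X : Finset ℕ} (h1 : InitSeg σ X) (h2 : InitSeg τ X) :
    InitSeg σ τ ∨ InitSeg τ σ := by
  rcases (by
    by_contra hc
    push_neg at hc
    obtain ⟨hns, hnt⟩ := hc
    obtain ⟨a, ha, ha'⟩ := Finset.not_subset.mp hns
    obtain ⟨b, hb, hb'⟩ := Finset.not_subset.mp hnt
    rcases le_total a b with hab | hab
    · exact ha' (h2.2 b hb a (h1.1 ha) hab)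
    · exact hb' (h1.2 a ha b (h2.1 hb) hab)
    : σ ⊆ τ ∨ τ ⊆ σ) with hs | hs
  · exact Or.inl (initSeg_of_subset hs h1 h2)
  · exact Or.inr (initSeg_of_subset hs h2 h1)

theorem initSegSet_of_initSeg {σ τ : Finset ℕ} {X : Set ℕ} (h1 : InitSeg σ τ)
    (h2 : InitSegSet τ X) : InitSegSet σ X :=
  ⟨fun a ha => h2.1 (h1.1 ha), fun a ha b hb hba => h1.2 a ha b (h2.2 a (h1.1 ha) b hb hba) hba⟩

theorem initSegSet_total {σ τ : Finset ℕ} {X : Set ℕ} (h1 : InitSegSet σ X)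
    (h2 : InitSegSet τ X) : InitSeg σ τ ∨ InitSeg τ σ := by
  have hsub : σ ⊆ τ ∨ τ ⊆ σ := by
    by_contra hc
    push_neg at hc
    obtain ⟨hns, hnt⟩ := hc
    obtain ⟨a, ha, ha'⟩ := Finset.not_subset.mp hns
    obtain ⟨b, hb, hb'⟩ := Finset.not_subset.mp hnt
    rcases le_total a b with hab | hab
    · exact ha' (h2.2 b hb a (h1.1 ha) hab)
    · exact hb' (h1.2 a ha b (h2.1 hb) hab)
  rcases hsub with hs | hs
  · exact Or.inl ⟨hs, fun a ha b hb hba => h1.2 a ha b (h2.1 hb) hba⟩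
  · exact Or.inr ⟨hs, fun a ha b hb hba => h2.2 a ha b (h1.1 hb) hba⟩

theorem initSeg_card_le {σ τ : Finset ℕ} {X : Set ℕ} (h1 : InitSegSet σ X)
    (h2 : InitSegSet τ X) (hc : σ.card ≤ τ.card) : InitSeg σ τ := by
  rcases initSegSet_total h1 h2 with h | h
  · exact h
  · have : τ = σ := Finset.eq_of_subset_of_card_le h.1 hc
    subst this; exact initSeg_refl _

theorem min'_initSeg {σ τ : Finset ℕ} (h : InitSeg σ τ) (hσ : σ.Nonempty) (hτ : τ.Nonempty) :
    σ.min' hσ = τ.min' hτ := by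
  refine le_antisymm ?_ (Finset.min'_le _ _ (h.1 (σ.min'_mem hσ)))
  exact Finset.min'_le _ _
    (h.2 _ (σ.min'_mem hσ) _ (τ.min'_mem hτ) (Finset.min'_le _ _ (h.1 (σ.min'_mem hσ))))

theorem min'_insert_of_lt {σ : Finset ℕ} {m : ℕ} (h : ∀ a ∈ σ, a < m) (hσ : σ.Nonempty) :
    (insert m σ).min' (Finset.insert_nonempty m σ) = σ.min' hσ :=
  (min'_initSeg (initSeg_insert h) hσ (Finset.insert_nonempty m σ)).symm

theorem initSeg_erase_max {τ : Finset ℕ} (hτ : τ.Nonempty) :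
    InitSeg (τ.erase (τ.max' hτ)) τ := by
  refine ⟨Finset.erase_subset _ _, fun a ha b hb hba => ?_⟩
  have ha' := Finset.mem_erase.mp ha
  refine Finset.mem_erase.mpr ⟨?_, hb⟩
  intro hbm
  exact ha'.1 (le_antisymm (Finset.le_max' _ _ ha'.2) (hbm ▸ hba))

theorem initSeg_subset_erase_max {σ τ : Finset ℕ} (hτ : τ.Nonempty) (h : InitSeg σ τ)
    (hne : σ ≠ τ) : σ ⊆ τ.erase (τ.max' hτ) := by
  intro a ha
  refine Finset.mem_erase.mpr ⟨fun hbm => ?_, h.1 ha⟩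
  exact hne (Finset.Subset.antisymm h.1 (fun b hb => h.2 a ha b hb
    (le_trans (Finset.le_max' _ _ hb) (le_of_eq hbm.symm))))

theorem initSeg_to_erase_max {σ τ : Finset ℕ} (hτ : τ.Nonempty) (h : InitSeg σ τ)
    (hne : σ ≠ τ) : InitSeg σ (τ.erase (τ.max' hτ)) :=
  initSeg_of_subset (initSeg_subset_erase_max hτ h hne) h (initSeg_erase_max hτ)

theorem erase_min_nonempty {σ : Finset ℕ} (hc : 2 ≤ σ.card) (hσ : σ.Nonempty) :
    (σ.erase (σ.min' hσ)).Nonempty := by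
  rw [← Finset.card_pos, Finset.card_erase_of_mem (σ.min'_mem hσ)]
  omega

theorem erase_max_nonempty {σ : Finset ℕ} (hc : 2 ≤ σ.card) (hσ : σ.Nonempty) :
    (σ.erase (σ.max' hσ)).Nonempty := by
  rw [← Finset.card_pos, Finset.card_erase_of_mem (σ.max'_mem hσ)]
  omega

theorem min'_erase_max' {σ : Finset ℕ} (hc : 2 ≤ σ.card) (hσ : σ.Nonempty) :
    (σ.erase (σ.max' hσ)).min' (erase_max_nonempty hc hσ) = σ.min' hσ := by
  refine le_antisymm (Finset.min'_le _ _ (Finset.mem_erase.mpr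
    ⟨ne_of_lt (σ.min'_lt_max'_of_card hc), σ.min'_mem hσ⟩)) (Finset.le_min' _ _ _ ?_)
  intro y hy
  exact Finset.min'_le _ _ (Finset.mem_erase.mp hy).2

theorem max'_erase_min' {σ : Finset ℕ} (hc : 2 ≤ σ.card) (hσ : σ.Nonempty) :
    (σ.erase (σ.min' hσ)).max' (erase_min_nonempty hc hσ) = σ.max' hσ := by
  refine le_antisymm (Finset.max'_le _ _ _ (fun y hy =>
    Finset.le_max' _ _ (Finset.mem_erase.mp hy).2)) (Finset.le_max' _ _ ?_)
  exact Finset.mem_erase.mpr ⟨(ne_of_lt (σ.min'_lt_max'_of_card hc)).symm, σ.max'_mem hσ⟩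

end InitSegLemmas

/-! ### Direction 2: from a bad sequence in `V̇` to a bad array -/

section Dir2

open scoped Classical

variable {Q : Type u} [Preorder Q]

theorem Vdot.isUr_or_sup (v : Vdot Q) : v.IsUr ∨ ∃ f, v = Vdot.sup f := by
  cases v with
  | up q => exact Or.inl ⟨q, rfl⟩
  | sup f => exact Or.inr ⟨f, rfl⟩

/-- Choose a member of `b` that beats all members of `T`, if possible. -/
noncomputable def pick (b T : Vdot Q) : Vdot Q :=
  match b with
  | .up q => .up q
  | .sup f => f (if h : ∃ i, Vdot.NotLeM (f i) T then h.choose else 0)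

theorem pick_up {q : Q} (T : Vdot Q) : pick (Vdot.up q) T = Vdot.up q := rfl

theorem pick_isMem {f : ℕ → Vdot Q} (T : Vdot Q) :
    Vdot.IsMem (pick (Vdot.sup f) T) (Vdot.sup f) := ⟨_, rfl⟩

theorem pick_notLeM {b T : Vdot Q} (h : ¬ Vdot.vles b T) : Vdot.NotLeM (pick b T) T := by
  cases b with
  | up q => exact Vdot.notLeM_of_not_vles h
  | sup f =>
      have h' := Vdot.exists_notLeM h
      show Vdot.NotLeM (f _) T
      rw [dif_pos h']
      exact h'.choose_spec

/-- The basic construction: descend into members along finite sets. -/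
noncomputable def Bc (y : ℕ → Vdot Q) (σ : Finset ℕ) : Vdot Q :=
  if h : 2 ≤ σ.card then
    have hσ : σ.Nonempty := Finset.card_pos.mp (by omega)
    pick (Bc y (σ.erase (σ.max' hσ))) (Bc y (σ.erase (σ.min' hσ)))
  else y (if h2 : σ.Nonempty then σ.min' h2 else 0)
termination_by σ.card
decreasing_by
  · rw [Finset.card_erase_of_mem (σ.max'_mem hσ)]; omega
  · rw [Finset.card_erase_of_mem (σ.min'_mem hσ)]; omega

variable (y : ℕ → Vdot Q)

theorem Bc_small {σ : Finset ℕ} (h : σ.card < 2) (hσ : σ.Nonempty) :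
    Bc y σ = y (σ.min' hσ) := by
  rw [Bc, dif_neg (by omega), dif_pos hσ]

theorem Bc_singleton (n : ℕ) : Bc y {n} = y n := by
  rw [Bc_small y (by simp) (Finset.singleton_nonempty n)]
  simp

theorem Bc_big {σ : Finset ℕ} (h : 2 ≤ σ.card) (hσ : σ.Nonempty) :
    Bc y σ = pick (Bc y (σ.erase (σ.max' hσ))) (Bc y (σ.erase (σ.min' hσ))) := by
  rw [Bc, dif_pos h]

/-- Once the construction hits an urelement, it stays put on extensions. -/
theorem Bc_stay : ∀ (n : ℕ) (ρ τ : Finset ℕ), ρ.card = n → InitSeg τ ρ → τ.Nonempty →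
    (Bc y τ).IsUr → Bc y ρ = Bc y τ := by
  intro n
  induction n using Nat.strong_induction_on with
  | _ n IH =>
    intro ρ τ hcard hIS hτ hu
    by_cases heq : τ = ρ
    · rw [heq]
    · have hρ : ρ.Nonempty := hτ.mono hIS.1
      have hsub := initSeg_subset_erase_max hρ hIS heq
      have hc2 : 2 ≤ ρ.card := by
        have h1 : τ.card ≤ (ρ.erase (ρ.max' hρ)).card := Finset.card_le_card hsub
        have h2 : 1 ≤ τ.card := Finset.card_pos.mpr hτ
        rw [Finset.card_erase_of_mem (ρ.max'_mem hρ)] at h1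
        omega
      have hIH : Bc y (ρ.erase (ρ.max' hρ)) = Bc y τ := by
        refine IH (ρ.erase (ρ.max' hρ)).card ?_ _ τ rfl
          (initSeg_to_erase_max hρ hIS heq) hτ hu
        rw [Finset.card_erase_of_mem (ρ.max'_mem hρ)]; omega
      rw [Bc_big y hc2 hρ, hIH]
      obtain ⟨q, hq⟩ := hu
      rw [hq, pick_up]

/-- One-step propagation of `NotLeM` down the construction. -/
theorem Bc_notLeM_step {u : Vdot Q} {ρ : Finset ℕ} (hc : 2 ≤ ρ.card) (hρ : ρ.Nonempty)
    (h : Vdot.NotLeM u (Bc y (ρ.erase (ρ.max' hρ)))) : Vdot.NotLeM u (Bc y ρ) := by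
  rw [Bc_big y hc hρ]
  rcases Vdot.isUr_or_sup (Bc y (ρ.erase (ρ.max' hρ))) with ⟨q, hq⟩ | ⟨f, hf⟩
  · rw [hq, pick_up]
    rw [hq] at h
    exact h
  · rw [hf]
    refine Vdot.notLeM_of_not_vles (h _ ?_)
    rw [hf]
    exact pick_isMem _

theorem Bc_descend {u : Vdot Q} : ∀ (n : ℕ) (ρ ρ₀ : Finset ℕ), ρ.card = n → InitSeg ρ₀ ρ →
    ρ₀.Nonempty → Vdot.NotLeM u (Bc y ρ₀) → Vdot.NotLeM u (Bc y ρ) := by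
  intro n
  induction n using Nat.strong_induction_on with
  | _ n IH =>
    intro ρ ρ₀ hcard hIS hρ₀ h
    by_cases heq : ρ₀ = ρ
    · rw [← heq]; exact h
    · have hρ : ρ.Nonempty := hρ₀.mono hIS.1
      have hsub := initSeg_subset_erase_max hρ hIS heq
      have hc2 : 2 ≤ ρ.card := by
        have h1 : ρ₀.card ≤ (ρ.erase (ρ.max' hρ)).card := Finset.card_le_card hsub
        have h2 : 1 ≤ ρ₀.card := Finset.card_pos.mpr hρ₀
        rw [Finset.card_erase_of_mem (ρ.max'_mem hρ)] at h1
        omega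
      refine Bc_notLeM_step y hc2 hρ ?_
      refine IH (ρ.erase (ρ.max' hρ)).card ?_ _ ρ₀ rfl
        (initSeg_to_erase_max hρ hIS heq) hρ₀ h
      rw [Finset.card_erase_of_mem (ρ.max'_mem hρ)]; omega

/-- The key invariant of the construction. -/
theorem Bc_inv (hbad : ∀ n m, n < m → ¬ Vdot.vles (y n) (y m)) : ∀ (n : ℕ) (σ : Finset ℕ), σ.card = n → ∀ (hc : 2 ≤ σ.card),
    Vdot.NotLeM (Bc y σ) (Bc y (σ.erase (σ.min' (Finset.card_pos.mp (by omega))))) := by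
  intro n
  induction n using Nat.strong_induction_on with
  | _ n IH =>
    intro σ hcard hc
    have hσ : σ.Nonempty := Finset.card_pos.mp (by omega)
    set n₀ := σ.min' hσ with hn₀
    set m := σ.max' hσ with hm
    have hn₀m : n₀ < m := σ.min'_lt_max'_of_card hc
    rw [Bc_big y hc hσ]
    refine pick_notLeM ?_
    by_cases hc3 : 3 ≤ σ.card
    · -- big case
      have hσ' : (σ.erase m).Nonempty := erase_max_nonempty hc hσ
      have hcσ' : 2 ≤ (σ.erase m).card := by
        rw [Finset.card_erase_of_mem (σ.max'_mem hσ)]; omega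
      have hmin' : (σ.erase m).min' hσ' = n₀ := min'_erase_max' hc hσ
      have hIH : Vdot.NotLeM (Bc y (σ.erase m)) (Bc y ((σ.erase m).erase n₀)) := by
        have := IH (σ.erase m).card
          (by rw [Finset.card_erase_of_mem (σ.max'_mem hσ)]; omega) (σ.erase m) rfl hcσ'
        rwa [hmin'] at this
      -- analyze Bc y (σ.erase n₀)
      have hρne : (σ.erase n₀).Nonempty := erase_min_nonempty hc hσ
      have hcρ : 2 ≤ (σ.erase n₀).card := by
        rw [Finset.card_erase_of_mem (σ.min'_mem hσ)]; omega
      have hmaxρ : (σ.erase n₀).max' hρne = m := max'_erase_min' hc hσ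
      have hρ : Bc y (σ.erase n₀) =
          pick (Bc y ((σ.erase n₀).erase ((σ.erase n₀).max' hρne)))
            (Bc y ((σ.erase n₀).erase ((σ.erase n₀).min' hρne))) := Bc_big y hcρ hρne
      rw [hmaxρ, Finset.erase_right_comm] at hρ
      -- so Bc y (σ.erase n₀) relates to Bc y ((σ.erase m).erase n₀)
      rcases Vdot.isUr_or_sup (Bc y ((σ.erase m).erase n₀)) with ⟨q, hq⟩ | ⟨f, hf⟩
      · rw [hq, pick_up] at hρ
        rw [hρ]
        exact hIH _ (by rw [hq]; rfl)
      · rw [hf] at hρ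
        refine hIH _ ?_
        rw [hf, hρ]
        exact pick_isMem _
    · -- card = 2 case
      have hcard2 : σ.card = 2 := by omega
      have h1 : (σ.erase m).card = 1 := by
        rw [Finset.card_erase_of_mem (σ.max'_mem hσ)]; omega
      have h2 : (σ.erase n₀).card = 1 := by
        rw [Finset.card_erase_of_mem (σ.min'_mem hσ)]; omega
      have hσ'ne : (σ.erase m).Nonempty := Finset.card_pos.mp (by omega)
      have hρne : (σ.erase n₀).Nonempty := Finset.card_pos.mp (by omega)
      have he1 : Bc y (σ.erase m) = y n₀ := by
        rw [Bc_small y (by omega) hσ'ne, min'_erase_max' hc hσ]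
      have he2 : Bc y (σ.erase n₀) = y m := by
        rw [Bc_small y (by omega) hρne]
        congr 1
        have : (σ.erase n₀).min' hρne = (σ.erase n₀).max' hρne := by
          rcases Finset.card_eq_one.mp h2 with ⟨a, ha⟩
          simp [ha]
        rw [this, max'_erase_min' hc hσ]
      rw [he1, he2]
      exact hbad n₀ m hn₀m

/-- The sequence of picked values has `rkp` bounded by that of its starting point. -/
theorem Bc_rkp : ∀ (n : ℕ) (σ : Finset ℕ), σ.card = n → ∀ (hσ : σ.Nonempty),
    (Bc y σ).rkp ≤ (y (σ.min' hσ)).rkp := by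
  intro n
  induction n using Nat.strong_induction_on with
  | _ n IH =>
    intro σ hcard hσ
    by_cases hc : 2 ≤ σ.card
    · have hσ' : (σ.erase (σ.max' hσ)).Nonempty := erase_max_nonempty hc hσ
      have hmin' : (σ.erase (σ.max' hσ)).min' hσ' = σ.min' hσ := min'_erase_max' hc hσ
      have hI : (Bc y (σ.erase (σ.max' hσ))).rkp ≤ (y (σ.min' hσ)).rkp := by
        have := IH (σ.erase (σ.max' hσ)).card
          (by rw [Finset.card_erase_of_mem (σ.max'_mem hσ)]; omega) _ rfl hσ'
        rwa [hmin'] at this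
      rw [Bc_big y hc hσ]
      rcases Vdot.isUr_or_sup (Bc y (σ.erase (σ.max' hσ))) with ⟨q, hq⟩ | ⟨f, hf⟩
      · rw [hq, pick_up]; rw [hq] at hI; exact hI
      · rw [hf]
        rw [hf] at hI
        refine le_trans (le_trans (Vdot.rkp_le_of_isMem (pick_isMem _)) ?_) hI
        exact Vdot.rk_le_rkp _
    · rw [Bc_small y (by omega) hσ]

/-- Strict rank decrease along proper initial segments where the construction is alive. -/
theorem Bc_rk_desc : ∀ (n : ℕ) (τ σ : Finset ℕ), τ.card = n → InitSeg σ τ → σ ≠ τ →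
    σ.Nonempty → (∀ ρ, ρ.Nonempty → InitSeg ρ τ → ¬ (Bc y ρ).IsUr) →
    (Bc y τ).rk < (Bc y σ).rk := by
  intro n
  induction n using Nat.strong_induction_on with
  | _ n IH =>
    intro τ σ hcard hIS hne hσne halive
    have hτ : τ.Nonempty := hσne.mono hIS.1
    have hsub := initSeg_subset_erase_max hτ hIS hne
    have hc2 : 2 ≤ τ.card := by
      have h1 : σ.card ≤ (τ.erase (τ.max' hτ)).card := Finset.card_le_card hsub
      have h2 : 1 ≤ σ.card := Finset.card_pos.mpr hσne
      rw [Finset.card_erase_of_mem (τ.max'_mem hτ)] at h1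
      omega
    have hτ'ne : (τ.erase (τ.max' hτ)).Nonempty := hσne.mono hsub
    obtain ⟨f, hf⟩ := (Vdot.isUr_or_sup (Bc y (τ.erase (τ.max' hτ)))).resolve_left
      (halive _ hτ'ne (initSeg_erase_max hτ))
    obtain ⟨gτ, hgτ⟩ := (Vdot.isUr_or_sup (Bc y τ)).resolve_left (halive _ hτ (initSeg_refl τ))
    have hmem : Vdot.IsMem (Bc y τ) (Vdot.sup f) := by
      rw [Bc_big y hc2 hτ, hf]
      exact pick_isMem _
    have hstep : (Bc y τ).rk < (Bc y (τ.erase (τ.max' hτ))).rk := by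
      calc (Bc y τ).rk < (Bc y τ).rkp := by rw [hgτ]; exact Vdot.rk_lt_rkp_sup
        _ ≤ (Vdot.sup f).rk := Vdot.rkp_le_of_isMem hmem
        _ = (Bc y (τ.erase (τ.max' hτ))).rk := by rw [hf]
    by_cases heq : σ = τ.erase (τ.max' hτ)
    · rw [← heq] at hstep; exact hstep
    · refine lt_trans hstep ?_
      refine IH (τ.erase (τ.max' hτ)).card
        (by rw [Finset.card_erase_of_mem (τ.max'_mem hτ)]; omega) _ σ rfl
        (initSeg_to_erase_max hτ hIS hne) heq hσne ?_
      intro ρ hρne hρIS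
      exact halive ρ hρne (initSeg_trans hρIS (initSeg_erase_max hτ))

end Dir2

/-! ### Direction 2: assembling the front -/

section Dir2Front

open scoped Classical

variable {Q : Type u} [Preorder Q]

theorem initSeg_singleton_min {τ : Finset ℕ} (hτ : τ.Nonempty) : InitSeg {τ.min' hτ} τ := by
  refine ⟨Finset.singleton_subset_iff.mpr (τ.min'_mem hτ), fun a ha b hb hba => ?_⟩
  rw [Finset.mem_singleton] at ha ⊢
  subst ha
  exact le_antisymm hba (Finset.min'_le _ _ hb)

variable (y : ℕ → Vdot Q)

/-- The front associated to the construction `Bc`. -/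
def FsetB : Set (Finset ℕ) :=
  {σ | σ.Nonempty ∧ (Bc y σ).IsUr ∧
    ∀ ρ, ρ.Nonempty → InitSeg ρ σ → ρ ≠ σ → ¬ (Bc y ρ).IsUr}

/-- The first-hit construction along an infinite set `X`. -/
theorem exists_FsetB (X : Set ℕ) (hX : X.Infinite) :
    ∃ σ ∈ FsetB y, InitSegSet σ X := by
  set e : ℕ → ℕ := Nat.nth (· ∈ X) with he
  have hmono : StrictMono e := Nat.nth_strictMono hX
  set s : ℕ → Finset ℕ := fun k => (Finset.range (k + 1)).image e with hs
  have hmem : ∀ k x, x ∈ s k ↔ ∃ i, i ≤ k ∧ e i = x := by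
    intro k x
    simp [hs, Finset.mem_image, Nat.lt_succ_iff]
  have hne : ∀ k, (s k).Nonempty := fun k => ⟨e 0, (hmem k _).mpr ⟨0, by omega, rfl⟩⟩
  have hcard : ∀ k, (s k).card = k + 1 := by
    intro k
    rw [hs]
    rw [Finset.card_image_of_injective _ hmono.injective, Finset.card_range]
  have hISS : ∀ k, InitSegSet (s k) X := by
    intro k
    constructor
    · intro x hx
      obtain ⟨i, _, rfl⟩ := (hmem k x).mp (by exact_mod_cast hx)
      exact Nat.nth_mem_of_infinite hX i
    · intro a ha b hb hba
      obtain ⟨i, hik, rfl⟩ := (hmem k a).mp ha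
      have hbe : e (Nat.count (· ∈ X) b) = b := Nat.nth_count hb
      have hji : Nat.count (· ∈ X) b ≤ i := by
        by_contra hgt
        push_neg at hgt
        exact absurd (lt_of_lt_of_le (hbe ▸ hmono hgt) hba) (lt_irrefl _)
      exact (hmem k b).mpr ⟨_, le_trans hji hik, hbe⟩
  have hmax : ∀ k, (s (k + 1)).max' (hne (k + 1)) = e (k + 1) := by
    intro k
    refine le_antisymm (Finset.max'_le _ _ _ ?_) (Finset.le_max' _ _ ?_)
    · intro x hx
      obtain ⟨i, hik, rfl⟩ := (hmem (k + 1) x).mp hx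
      exact hmono.monotone hik
    · exact (hmem (k + 1) _).mpr ⟨k + 1, le_refl _, rfl⟩
  have herase : ∀ k, (s (k + 1)).erase (e (k + 1)) = s k := by
    intro k
    ext x
    rw [Finset.mem_erase, hmem, hmem]
    constructor
    · rintro ⟨hxe, i, hik, rfl⟩
      refine ⟨i, ?_, rfl⟩
      rcases Nat.lt_succ_iff_lt_or_eq.mp (Nat.lt_succ_of_le hik) with h | h
      · omega
      · exact absurd (congrArg e h) hxe
    · rintro ⟨i, hik, rfl⟩
      exact ⟨fun hc => absurd (hmono.injective hc) (by omega), i, by omega, rfl⟩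
  -- find the first k where Bc hits an urelement
  have hex : ∃ k, (Bc y (s k)).IsUr := by
    by_contra hno
    push_neg at hno
    have hdec : ∀ k, (Bc y (s (k + 1))).rkp < (Bc y (s k)).rkp := by
      intro k
      obtain ⟨f, hf⟩ := (Vdot.isUr_or_sup (Bc y (s k))).resolve_left (hno k)
      have hc2 : 2 ≤ (s (k + 1)).card := by rw [hcard]; omega
      have hmem2 : Vdot.IsMem (Bc y (s (k + 1))) (Vdot.sup f) := by
        rw [Bc_big y hc2 (hne (k + 1)), hmax, herase, hf]
        exact pick_isMem _
      calc (Bc y (s (k + 1))).rkp ≤ (Vdot.sup f).rk := Vdot.rkp_le_of_isMem hmem2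
        _ < (Vdot.sup f).rkp := Vdot.rk_lt_rkp_sup
        _ = (Bc y (s k)).rkp := by rw [hf]
    exact (RelEmbedding.natGT (fun k => (Bc y (s k)).rkp)
      hdec).not_wellFounded Ordinal.lt_wf
  set k₀ := Nat.find hex with hk₀
  refine ⟨s k₀, ⟨hne k₀, Nat.find_spec hex, ?_⟩, hISS k₀⟩
  intro ρ hρne hρIS hρeq
  have hρX : InitSegSet ρ X := initSegSet_of_initSeg hρIS (hISS k₀)
  have hc1 : 1 ≤ ρ.card := Finset.card_pos.mpr hρne
  have hclt : ρ.card < k₀ + 1 := by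
    rw [← hcard k₀]
    exact Finset.card_lt_card (Finset.ssubset_iff_subset_ne.mpr ⟨hρIS.1, hρeq⟩)
  have hρeq' : ρ = s (ρ.card - 1) := by
    refine initSeg_antisymm ?_ ?_
    · exact initSeg_card_le hρX (hISS _) (by rw [hcard]; omega)
    · exact initSeg_card_le (hISS _) hρX (by rw [hcard]; omega)
  rw [hρeq']
  exact Nat.find_min hex (by omega)

/-- Elements of the front with arbitrary minimum. -/
theorem exists_FsetB_min (n : ℕ) :
    ∃ σ, ∃ h : σ ∈ FsetB y, σ.min' h.1 = n := by
  obtain ⟨σ, hσF, hσX⟩ := exists_FsetB y (Set.Ici n) (Set.Ici_infinite n)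
  have hnmem : n ∈ σ := by
    obtain ⟨a, ha⟩ := hσF.1
    have haX : (a : ℕ) ∈ Set.Ici n := hσX.1 (Finset.mem_coe.mpr ha)
    exact hσX.2 a ha n (Set.mem_Ici.mpr le_rfl) (Set.mem_Ici.mp haX)
  exact ⟨σ, hσF, le_antisymm (Finset.min'_le _ _ hnmem)
    (Finset.le_min' _ _ _ (fun b hb => Set.mem_Ici.mp (hσX.1 (Finset.mem_coe.mpr hb))))⟩

/-- Rank bound for alive sets. -/
theorem Bc_rk_le_min {τ : Finset ℕ} (hτ : τ.Nonempty)
    (halive : ∀ ρ, ρ.Nonempty → InitSeg ρ τ → ¬ (Bc y ρ).IsUr) :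
    (Bc y τ).rk ≤ (y (τ.min' hτ)).rk := by
  by_cases hc : 2 ≤ τ.card
  · obtain ⟨f, hf⟩ := (Vdot.isUr_or_sup (Bc y τ)).resolve_left (halive τ hτ (initSeg_refl τ))
    obtain ⟨f', hf'⟩ := (Vdot.isUr_or_sup (y (τ.min' hτ))).resolve_left (by
      have := halive _ (Finset.singleton_nonempty _) (initSeg_singleton_min hτ)
      rwa [Bc_singleton] at this)
    have h1 : (Bc y τ).rk < (Bc y τ).rkp := by rw [hf]; exact Vdot.rk_lt_rkp_sup
    have h2 : (Bc y τ).rkp ≤ (y (τ.min' hτ)).rkp := Bc_rkp y τ.card τ rfl hτ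
    have h3 : (y (τ.min' hτ)).rkp = (y (τ.min' hτ)).rk + 1 := by
      rw [hf', Vdot.rkp_sup, Vdot.rk_sup]
    have := lt_of_lt_of_le h1 h2
    rw [h3, Ordinal.add_one_eq_succ, Order.lt_succ_iff] at this
    exact this
  · rw [Bc_small y (by omega) hτ]

variable (β : Ordinal.{0})

/-- The front for direction 2. -/
noncomputable def FrB (hβ : ∀ n f, y n = Vdot.sup f → (y n).rk < β) : Front where
  F := FsetB y
  infinite := by
    have : ∀ n : ℕ, (fun n => (exists_FsetB_min y n).choose) n ∈ FsetB y :=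
      fun n => (exists_FsetB_min y n).choose_spec.1
    refine Set.infinite_of_injective_forall_mem (f := fun n => (exists_FsetB_min y n).choose)
      ?_ this
    intro a b hab
    have ha := (exists_FsetB_min y a).choose_spec
    have hb := (exists_FsetB_min y b).choose_spec
    rw [← ha.2, ← hb.2]
    congr 1
  antichain := by
    intro σ hσ τ hτ hIS
    by_contra hne
    exact hτ.2.2 σ hσ.1 hIS hne hσ.2.1
  covers := fun X hX _ => exists_FsetB y X hX
  rk := fun ρ => if h : ρ.Nonempty then (Bc y ρ).rk else β
  rk_strict := by
    intro σ τ hσp hτp hIS hne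
    obtain ⟨ρ, hρF, hρIS, hρne⟩ := hτp
    have halive : ∀ ρ', ρ'.Nonempty → InitSeg ρ' τ → ¬ (Bc y ρ').IsUr := by
      intro ρ' hρ'ne hρ'IS
      refine hρF.2.2 ρ' hρ'ne (initSeg_trans hρ'IS hρIS) ?_
      rintro rfl
      exact hρne (initSeg_antisymm hρIS hρ'IS)
    have hτne : τ.Nonempty := by
      rcases Finset.eq_empty_or_nonempty τ with rfl | h
      · exact absurd (Finset.subset_empty.mp hIS.1) hne
      · exact h
    rw [dif_pos hτne]
    by_cases hσne : σ.Nonempty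
    · rw [dif_pos hσne]
      exact Bc_rk_desc y τ.card τ σ rfl hIS hne hσne halive
    · rw [dif_neg hσne]
      have h1 := Bc_rk_le_min y hτne halive
      obtain ⟨f', hf'⟩ := (Vdot.isUr_or_sup (y (τ.min' hτne))).resolve_left (by
        have := halive _ (Finset.singleton_nonempty _) (initSeg_singleton_min hτne)
        rwa [Bc_singleton] at this)
      exact lt_of_le_of_lt h1 (hβ _ _ hf')

theorem FrB_rank (hβ : ∀ n f, y n = Vdot.sup f → (y n).rk < β) :
    (FrB y β hβ).rank = β := by
  show (if h : (∅ : Finset ℕ).Nonempty then (Bc y ∅).rk else β) = β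
  rw [dif_neg (by simp)]

end Dir2Front

/-! ### Direction 2: the bad array, and the wrapper -/

section Dir2Bad

open scoped Classical

variable {Q : Type u} [Preorder Q] (y : ℕ → Vdot Q)

/-- The array associated to the front `FrB`. -/
noncomputable def gB : Finset ℕ → Q :=
  fun σ => if h : (Bc y σ).IsUr then h.choose else (y 0).witness

theorem Bc_eq_up_gB {σ : Finset ℕ} (h : (Bc y σ).IsUr) : Bc y σ = Vdot.up (gB y σ) := by
  show Bc y σ = Vdot.up (if h' : (Bc y σ).IsUr then h'.choose else (y 0).witness)
  rw [dif_pos h]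
  exact h.choose_spec

theorem badArray_FrB (β : Ordinal.{0}) (hbad : ∀ n m, n < m → ¬ Vdot.vles (y n) (y m))
    (hβ : ∀ n f, y n = Vdot.sup f → (y n).rk < β) :
    BadArray (FrB y β hβ) (gB y) := by
  intro σ hσF τ hτF htri
  obtain ⟨hσne, hτne, hlt, hcomp⟩ := htri
  have hσF' : σ ∈ FsetB y := hσF
  have hτF' : τ ∈ FsetB y := hτF
  intro hle
  have hvles : Vdot.vles (Bc y σ) (Bc y τ) := by
    rw [Bc_eq_up_gB y hσF'.2.1, Bc_eq_up_gB y hτF'.2.1]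
    exact hle
  have hnot : Vdot.NotLeM (Bc y σ) (Bc y τ) → False := by
    intro hN
    refine hN (Bc y τ) ?_ hvles
    rw [Bc_eq_up_gB y hτF'.2.1]
    rfl
  by_cases hc : 2 ≤ σ.card
  · have hinv := Bc_inv y hbad σ.card σ rfl hc
    have hσ'ne : (σ.erase (σ.min' hσne)).Nonempty := erase_min_nonempty hc hσne
    rcases hcomp with hIS | hIS
    · exact hnot (Bc_descend y τ.card τ _ rfl hIS hσ'ne hinv)
    · refine hnot ?_
      have hstay : Bc y (σ.erase (σ.min' hσne)) = Bc y τ :=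
        Bc_stay y _ _ τ rfl hIS hτne hτF'.2.1
      rw [← hstay]
      exact hinv
  · -- σ is a singleton
    have hσ1 : σ.card = 1 := by
      have := Finset.card_pos.mpr hσne
      omega
    have hBσ : Bc y σ = y (σ.min' hσne) := Bc_small y (by omega) hσne
    have h0 : ¬ Vdot.vles (y (σ.min' hσne)) (y (τ.min' hτne)) := hbad _ _ hlt
    have h1 : Vdot.NotLeM (Bc y σ) (Bc y {τ.min' hτne}) := by
      rw [hBσ, Bc_singleton]
      exact Vdot.notLeM_of_not_vles h0
    exact hnot (Bc_descend y τ.card τ _ rfl (initSeg_singleton_min hτne)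
      (Finset.singleton_nonempty _) h1)

end Dir2Bad

section Dir2Wrap

open scoped Classical

variable {Q : Type u} [Preorder Q]

theorem dir2 (α : Ordinal.{0}) (hnl : ¬ Order.IsSuccLimit α) (hwqo : IsAlphaWqo α Q) :
    ¬ ∃ x : ℕ → Vdot Q, (∀ i, (x i).memV α) ∧
      ∀ i, Vdot.vles (x (i + 1)) (x i) ∧ ¬ Vdot.vles (x i) (x (i + 1)) := by
  rintro ⟨x, hmem, hdesc⟩
  have hch : ∀ i j, i ≤ j → Vdot.vles (x j) (x i) := by
    intro i j h
    induction j, h using Nat.le_induction with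
    | base => exact Vdot.vles_refl _
    | succ j hj IH => exact Vdot.vles_trans (hdesc j).1 IH
  have hbadx : ∀ i j, i < j → ¬ Vdot.vles (x i) (x j) := by
    intro i j hij hc
    exact (hdesc i).2 (Vdot.vles_trans hc (hch (i + 1) j hij))
  rcases Ordinal.zero_or_succ_or_isSuccLimit α with rfl | ⟨β0, rfl⟩ | hl
  · -- α = 0 : everything is an urelement
    have hur : ∀ i, (x i).IsUr := by
      intro i
      rcases hmem i with h | h
      · exact h
      · exact absurd h (not_lt_of_ge (zero_le ..))
    refine hwqo.1 ⟨fun i => (hur i).choose, fun i => ⟨?_, ?_⟩⟩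
    · have h := (hdesc i).1
      rwa [(hur (i + 1)).choose_spec, (hur i).choose_spec] at h
    · have h := (hdesc i).2
      rwa [(hur i).choose_spec, (hur (i + 1)).choose_spec] at h
  · -- α = β0 + 1
    by_cases hS : {i | (x i).IsUr}.Infinite
    · -- infinitely many urelements: contradict WFqo
      set e : ℕ → ℕ := Nat.nth (· ∈ {i | (x i).IsUr}) with he
      have hmono : StrictMono e := Nat.nth_strictMono hS
      have hure : ∀ i, (x (e i)).IsUr := fun i => Nat.nth_mem_of_infinite hS i
      refine hwqo.1 ⟨fun i => (hure i).choose, fun i => ⟨?_, ?_⟩⟩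
      · have h := hch (e i) (e (i + 1)) (le_of_lt (hmono (by omega)))
        rwa [(hure (i + 1)).choose_spec, (hure i).choose_spec] at h
      · have h := hbadx (e i) (e (i + 1)) (hmono (by omega))
        rwa [(hure i).choose_spec, (hure (i + 1)).choose_spec] at h
    · -- finitely many urelements: pass to a tail of sups
      obtain ⟨N, hN⟩ : ∃ N, ∀ i, N ≤ i → ¬ (x i).IsUr := by
        obtain ⟨N, hub⟩ := (Set.not_infinite.mp hS).bddAbove
        exact ⟨N + 1, fun i hi hc => by
          have := hub hc
          omega⟩
      set x' : ℕ → Vdot Q := fun i => x (N + i) with hx'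
      have hx'sup : ∀ i, ∃ f, x' i = Vdot.sup f :=
        fun i => (Vdot.isUr_or_sup (x' i)).resolve_left (hN _ (by omega))
      set F' : ℕ → ℕ → Vdot Q := fun i => (hx'sup i).choose with hF'def
      have hF' : ∀ i, x' i = Vdot.sup (F' i) := fun i => (hx'sup i).choose_spec
      have hbad' : ∀ i j, i < j → ¬ Vdot.vles (x' i) (x' j) :=
        fun i j h => hbadx _ _ (by omega)
      have hch' : ∀ i j, i ≤ j → Vdot.vles (x' j) (x' i) :=
        fun i j h => hch _ _ (by omega)
      have hnot : ∀ i, ¬ Vdot.vles (Vdot.sup (F' i)) (x' (i + 1)) := by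
        intro i
        rw [← hF']
        exact hbad' i (i + 1) (by omega)
      set u : ℕ → Vdot Q := fun i => F' i (Vdot.exists_notLeM (hnot i)).choose with hu_def
      have hu : ∀ i, Vdot.NotLeM (u i) (x' (i + 1)) :=
        fun i => (Vdot.exists_notLeM (hnot i)).choose_spec
      have humem : ∀ i, Vdot.IsMem (u i) (Vdot.sup (F' i)) := fun i => ⟨_, rfl⟩
      have hbadu : ∀ i j, i < j → ¬ Vdot.vles (u i) (u j) := by
        intro i j hij hc
        rcases Nat.eq_or_lt_of_le hij with heq | hlt'
        · have hj : j = i + 1 := heq.symm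
          subst hj
          refine hu i (u (i + 1)) ?_ hc
          rw [hF' (i + 1)]
          exact humem (i + 1)
        · have h2 : Vdot.vles (x' j) (x' (i + 1)) := hch' _ _ (by omega)
          rw [hF' j, hF' (i + 1)] at h2
          obtain ⟨l, hl⟩ := h2 (Vdot.exists_notLeM (hnot j)).choose
          refine hu i (F' (i + 1) l) ?_ (Vdot.vles_trans hc ?_)
          · rw [hF' (i + 1)]
            exact ⟨l, rfl⟩
          · exact hl
      have hrk : ∀ n f, u n = Vdot.sup f → (u n).rk < β0 := by
        intro n f hf
        have h1 : (u n).rkp ≤ (x' n).rk := by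
          have := Vdot.rkp_le_of_isMem (humem n)
          rwa [← hF'] at this
        have h2 : (x' n).rk ≤ β0 := by
          rcases hmem (N + n) with h | h
          · exact absurd h (hN _ (by omega))
          · exact Order.lt_succ_iff.mp h
        have h3 : (u n).rk < (u n).rkp := by rw [hf]; exact Vdot.rk_lt_rkp_sup
        exact lt_of_lt_of_le h3 (le_trans h1 h2)
      have hrank : (FrB u β0 hrk).rank < Order.succ β0 := by
        rw [FrB_rank]
        exact Order.lt_succ_of_le (le_refl β0)
      exact hwqo.2 (FrB u β0 hrk) hrank (gB u) (badArray_FrB u β0 hbadu hrk)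
  · exact hnl hl
end Dir2Wrap

/-! ### Direction 1: from a bad array to a descending sequence in `V̇` -/

section Dir1

open scoped Classical

variable {Q : Type u} [Preorder Q]

theorem inter_Ici_infinite {s : Set ℕ} (hs : s.Infinite) (n : ℕ) :
    {m | m ∈ s ∧ n ≤ m}.Infinite := by
  have heq : s \ {m | m < n} = {m | m ∈ s ∧ n ≤ m} := by
    ext x; simp [Nat.not_lt]
  rw [← heq]
  exact hs.diff (Set.finite_lt_nat n)

variable (Fr : Front)

theorem Front.nonempty_of_mem {σ : Finset ℕ} (hσ : σ ∈ Fr.F) : σ.Nonempty := by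
  rcases Finset.eq_empty_or_nonempty σ with rfl | h
  · have hsub : Fr.F ⊆ {∅} := by
      intro τ hτ
      exact (Fr.antichain ∅ hσ τ hτ (initSeg_empty τ)).symm
    exact absurd ((Set.finite_singleton ∅).subset hsub) Fr.infinite
  · exact h

theorem Front.empty_not_mem : ∅ ∉ Fr.F := fun h =>
  absurd (Fr.nonempty_of_mem h) Finset.not_nonempty_empty

theorem Front.subset_union {σ : Finset ℕ} (hσ : σ ∈ Fr.F) : ∀ a ∈ σ, a ∈ Fr.union :=
  fun a ha => ⟨σ, hσ, ha⟩

theorem Front.union_infinite : Fr.union.Infinite := by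
  by_contra hfin
  rw [Set.not_infinite] at hfin
  have hsub : Fr.F ⊆ ↑hfin.toFinset.powerset := by
    intro σ hσ
    rw [Finset.mem_coe, Finset.mem_powerset]
    intro a ha
    rw [Set.Finite.mem_toFinset]
    exact Fr.subset_union hσ a ha
  exact absurd (hfin.toFinset.powerset.finite_toSet.subset hsub) Fr.infinite

/-- The tree of initial segments of elements of the front. -/
def Tset : Set (Finset ℕ) := {σ | ∃ ρ ∈ Fr.F, InitSeg σ ρ}

theorem empty_mem_Tset : ∅ ∈ Tset Fr := by
  obtain ⟨ρ, hρ⟩ := Fr.infinite.nonempty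
  exact ⟨ρ, hρ, initSeg_empty ρ⟩

theorem Tset_subset_union {σ : Finset ℕ} (hσ : σ ∈ Tset Fr) : ∀ a ∈ σ, a ∈ Fr.union := by
  obtain ⟨ρ, hρ, hIS⟩ := hσ
  exact fun a ha => ⟨ρ, hρ, hIS.1 ha⟩

theorem Tset_proper {σ : Finset ℕ} (hσ : σ ∈ Tset Fr) (hF : σ ∉ Fr.F) :
    ∃ ρ ∈ Fr.F, InitSeg σ ρ ∧ σ ≠ ρ := by
  obtain ⟨ρ, hρ, hIS⟩ := hσ
  refine ⟨ρ, hρ, hIS, ?_⟩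
  rintro rfl
  exact hF hρ

/-- The tree extension property: below any node of the tree, any sufficiently large
element of the union extends it inside the tree. -/
theorem tree_ext {σ : Finset ℕ} (hT : σ ∈ Tset Fr) (hF : σ ∉ Fr.F) {m : ℕ}
    (hmU : m ∈ Fr.union) (hmgt : ∀ a ∈ σ, a < m) : insert m σ ∈ Tset Fr := by
  set X : Set ℕ := ↑σ ∪ {k | k ∈ Fr.union ∧ m ≤ k} with hX
  have hXinf : X.Infinite := (inter_Ici_infinite Fr.union_infinite m).mono
    Set.subset_union_right
  have hXU : X ⊆ {n | ∃ σ ∈ Fr.F, n ∈ σ} := by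
    rintro k (hk | ⟨hk, _⟩)
    · exact Tset_subset_union Fr hT _ hk
    · exact hk
  obtain ⟨ρ', hρ'F, hρ'X⟩ := Fr.covers X hXinf hXU
  have hσX : InitSegSet σ X := by
    constructor
    · exact fun a ha => Or.inl ha
    · rintro a ha b (hb | ⟨_, hmb⟩) hba
      · exact hb
      · exact absurd (lt_of_lt_of_le (hmgt a ha) (le_trans hmb hba)) (lt_irrefl _)
  have hσXset : InitSegSet σ X := hσX
  rcases initSegSet_total hσXset hρ'X with hIS | hIS
  · -- σ ⊑ ρ'
    by_cases heq : σ = ρ'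
    · exact absurd (heq ▸ hρ'F) hF
    · have hmρ' : m ∈ ρ' := by
        obtain ⟨b, hb, hbσ⟩ := Finset.exists_of_ssubset
          (Finset.ssubset_iff_subset_ne.mpr ⟨hIS.1, heq⟩)
        have hbX : (b : ℕ) ∈ X := hρ'X.1 (Finset.mem_coe.mpr hb)
        rcases hbX with hbσ' | ⟨_, hmb⟩
        · exact absurd hbσ' hbσ
        · exact hρ'X.2 b hb m (Or.inr ⟨hmU, le_refl m⟩) hmb
      refine ⟨ρ', hρ'F, ⟨Finset.insert_subset hmρ' hIS.1, ?_⟩⟩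
      intro a ha b hb hba
      have hbX : (b : ℕ) ∈ X := hρ'X.1 (Finset.mem_coe.mpr hb)
      rcases hbX with hbσ | ⟨_, hmb⟩
      · exact Finset.mem_insert_of_mem hbσ
      · rcases Finset.mem_insert.mp ha with rfl | haσ
        · rw [le_antisymm hba hmb]
          exact Finset.mem_insert_self _ _
        · exact absurd (lt_of_lt_of_le (hmgt a haσ) (le_trans hmb hba)) (lt_irrefl _)
  · -- ρ' ⊑ σ : contradiction
    obtain ⟨ρ, hρF, hISρ⟩ := hT
    have hρρ : ρ' = ρ := Fr.antichain ρ' hρ'F ρ hρF (initSeg_trans hIS hISρ)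
    subst hρρ
    have hσρ : σ = ρ' := initSeg_antisymm hISρ hIS
    exact (hF (by rw [hσρ]; exact hρ'F)).elim

theorem singleton_mem_Tset {m : ℕ} (hmU : m ∈ Fr.union) : {m} ∈ Tset Fr := by
  have := tree_ext Fr (empty_mem_Tset Fr) (Fr.empty_not_mem) hmU (by simp)
  simpa using this

/-- Enumeration of possible children elements. -/
noncomputable def chEnum (σ : Finset ℕ) (k : ℕ) : ℕ :=
  Nat.nth (fun m => m ∈ Fr.union ∧ ∀ a ∈ σ, a < m) k

theorem chEnum_pred_infinite (σ : Finset ℕ) :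
    {m | m ∈ Fr.union ∧ ∀ a ∈ σ, a < m}.Infinite := by
  refine (inter_Ici_infinite Fr.union_infinite (σ.sup id + 1)).mono ?_
  rintro m ⟨h2, h3⟩
  refine ⟨h2, fun a ha => ?_⟩
  have : a ≤ σ.sup id := Finset.le_sup (f := id) ha
  omega

theorem chEnum_spec (σ : Finset ℕ) (k : ℕ) :
    chEnum Fr σ k ∈ Fr.union ∧ ∀ a ∈ σ, a < chEnum Fr σ k :=
  Nat.nth_mem_of_infinite (chEnum_pred_infinite Fr σ) k

theorem chEnum_surj (σ : Finset ℕ) {m : ℕ} (h1 : m ∈ Fr.union) (h2 : ∀ a ∈ σ, a < m) :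
    ∃ k, chEnum Fr σ k = m :=
  ⟨Nat.count (fun m => m ∈ Fr.union ∧ ∀ a ∈ σ, a < m) m, Nat.nth_count ⟨h1, h2⟩⟩

/-- The termination measure. -/
noncomputable def muF (σ : Finset ℕ) : Ordinal.{0} :=
  if σ ∈ Fr.F then 0 else Fr.rk σ + 1

theorem rk_insert_lt {σ : Finset ℕ} (hT : σ ∈ Tset Fr) (hF : σ ∉ Fr.F) {m : ℕ}
    (hmU : m ∈ Fr.union) (hmgt : ∀ a ∈ σ, a < m) (hFi : insert m σ ∉ Fr.F) :
    Fr.rk (insert m σ) < Fr.rk σ := by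
  refine Fr.rk_strict σ (insert m σ) (Tset_proper Fr hT hF)
    (Tset_proper Fr (tree_ext Fr hT hF hmU hmgt) hFi) (initSeg_insert hmgt) ?_
  intro heq
  have : m ∈ σ := heq ▸ Finset.mem_insert_self m σ
  exact absurd (hmgt m this) (lt_irrefl m)

theorem muF_lt {σ : Finset ℕ} (hT : σ ∈ Tset Fr) (hF : σ ∉ Fr.F) (k : ℕ) :
    muF Fr (insert (chEnum Fr σ k) σ) < muF Fr σ := by
  have hm := chEnum_spec Fr σ k
  simp only [muF]
  rw [if_neg hF]
  by_cases hFi : insert (chEnum Fr σ k) σ ∈ Fr.F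
  · rw [if_pos hFi]
    exact lt_of_le_of_lt (zero_le ..) (lt_add_one _)
  · rw [if_neg hFi]
    have hlt := rk_insert_lt Fr hT hF hm.1 hm.2 hFi
    rw [Ordinal.add_one_eq_succ, Ordinal.add_one_eq_succ]
    exact Order.succ_lt_succ hlt

variable (g : Finset ℕ → Q)

/-- The recursive construction transforming a bad array into elements of `V̇`. -/
noncomputable def Gc : Finset ℕ → Vdot Q :=
  WellFounded.fix (InvImage.wf (muF Fr) Ordinal.lt_wf)
    (fun σ IH =>
      if hF : σ ∈ Fr.F then Vdot.up (g σ)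
      else if hT : σ ∈ Tset Fr then
        Vdot.sup (fun k => IH (insert (chEnum Fr σ k) σ) (muF_lt Fr hT hF k))
      else Vdot.up (g σ))

theorem Gc_eq (σ : Finset ℕ) : Gc Fr g σ =
    if hF : σ ∈ Fr.F then Vdot.up (g σ)
    else if hT : σ ∈ Tset Fr then
      Vdot.sup (fun k => Gc Fr g (insert (chEnum Fr σ k) σ))
    else Vdot.up (g σ) := by
  rw [Gc, WellFounded.fix_eq]

theorem Gc_F {σ : Finset ℕ} (hF : σ ∈ Fr.F) : Gc Fr g σ = Vdot.up (g σ) := by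
  rw [Gc_eq, dif_pos hF]

theorem Gc_T {σ : Finset ℕ} (hF : σ ∉ Fr.F) (hT : σ ∈ Tset Fr) :
    Gc Fr g σ = Vdot.sup (fun k => Gc Fr g (insert (chEnum Fr σ k) σ)) := by
  rw [Gc_eq, dif_neg hF, dif_pos hT]

theorem Gc_rkp : ∀ (o : Ordinal.{0}) (σ : Finset ℕ), muF Fr σ = o → σ ∈ Tset Fr →
    σ ∉ Fr.F → (Gc Fr g σ).rkp ≤ Fr.rk σ + 1 := by
  intro o
  induction o using Ordinal.induction with
  | h o IHo =>
    rintro σ rfl hT hF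
    rw [Gc_T Fr g hF hT, Vdot.rkp_sup]
    rw [Ordinal.add_one_eq_succ, Ordinal.add_one_eq_succ]
    refine Order.succ_le_succ ?_
    refine Ordinal.iSup_le ?_
    intro k
    by_cases hFi : insert (chEnum Fr σ k) σ ∈ Fr.F
    · rw [Gc_F Fr g hFi, Vdot.rkp_up]
      exact zero_le ..
    · have hm := chEnum_spec Fr σ k
      have hTi := tree_ext Fr hT hF hm.1 hm.2
      have h1 := IHo _ (muF_lt Fr hT hF k) _ rfl hTi hFi
      have h2 := rk_insert_lt Fr hT hF hm.1 hm.2 hFi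
      exact le_trans h1 (Order.add_one_le_of_lt h2)

end Dir1

/-! ### Direction 1: the main lemma -/

section Dir1Main

open scoped Classical

variable {Q : Type u} [Preorder Q]

theorem erase_min_insert {σ : Finset ℕ} (hσne : σ.Nonempty) {m : ℕ}
    (hmgt : ∀ a ∈ σ, a < m) :
    (insert m σ).erase ((insert m σ).min' (Finset.insert_nonempty m σ)) =
      insert m (σ.erase (σ.min' hσne)) := by
  have hmne : m ≠ σ.min' hσne := (hmgt _ (σ.min'_mem hσne)).ne'
  rw [min'_insert_of_lt hmgt hσne, Finset.erase_insert_of_ne hmne]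

theorem follow_step {σ τ : Finset ℕ} (hσne : σ.Nonempty) (hτne : τ.Nonempty)
    (hlt : σ.min' hσne < τ.min' hτne)
    (hA1 : InitSeg (σ.erase (σ.min' hσne)) τ) (hA2 : σ.erase (σ.min' hσne) ≠ τ) :
    ∃ m, m ∈ τ ∧ (∀ a ∈ σ, a < m) ∧ InitSeg (insert m (σ.erase (σ.min' hσne))) τ := by
  set σb := σ.erase (σ.min' hσne) with hσb
  have hdiffne : (τ \ σb).Nonempty := by
    rw [Finset.sdiff_nonempty]
    intro hsub
    exact hA2 (Finset.Subset.antisymm hA1.1 hsub)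
  set m := (τ \ σb).min' hdiffne with hm_def
  have hmmem := Finset.mem_sdiff.mp ((τ \ σb).min'_mem hdiffne)
  have hmgt : ∀ a ∈ σ, a < m := by
    intro a ha
    by_cases hamin : a = σ.min' hσne
    · rw [hamin]
      exact lt_of_lt_of_le hlt (Finset.min'_le _ _ hmmem.1)
    · have haσb : a ∈ σb := Finset.mem_erase.mpr ⟨hamin, ha⟩
      rcases lt_or_ge a m with h | h
      · exact h
      · exact absurd (hA1.2 a haσb m hmmem.1 h) hmmem.2
  refine ⟨m, hmmem.1, hmgt, ⟨Finset.insert_subset hmmem.1 hA1.1, ?_⟩⟩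
  intro a ha b hb hba
  rcases Finset.mem_insert.mp ha with heq | haσb
  · by_cases hbσb : b ∈ σb
    · exact Finset.mem_insert_of_mem hbσb
    · have h1 : m ≤ b := Finset.min'_le _ _ (Finset.mem_sdiff.mpr ⟨hb, hbσb⟩)
      have h2 : b = m := le_antisymm (heq ▸ hba) h1
      rw [h2]
      exact Finset.mem_insert_self _ _
  · exact Finset.mem_insert_of_mem (hA1.2 a haσb b hb hba)

variable (Fr : Front) (g : Finset ℕ → Q)

theorem main1 (hbadg : BadArray Fr g) :
    ∀ (o₁ o₂ : Ordinal.{0}) (σ τ : Finset ℕ), muF Fr σ = o₁ → muF Fr τ = o₂ →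
    σ ∈ Tset Fr → τ ∈ Tset Fr → ∀ (hσne : σ.Nonempty) (hτne : τ.Nonempty),
    σ.min' hσne < τ.min' hτne →
    ((InitSeg (σ.erase (σ.min' hσne)) τ ∧ σ.erase (σ.min' hσne) ≠ τ) ∨
      (τ ∈ Fr.F ∧ (InitSeg (σ.erase (σ.min' hσne)) τ ∨ InitSeg τ (σ.erase (σ.min' hσne))))) →
    ¬ Vdot.vles (Gc Fr g σ) (Gc Fr g τ) := by
  intro o₁
  induction o₁ using Ordinal.induction with
  | h o₁ IH1 =>
  intro o₂
  induction o₂ using Ordinal.induction with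
  | h o₂ IH2 =>
  rintro σ τ rfl rfl hσT hτT hσne hτne hlt hcond hvles
  by_cases hσF : σ ∈ Fr.F <;> by_cases hτF : τ ∈ Fr.F
  · -- both in F : contradict badness
    rw [Gc_F Fr g hσF, Gc_F Fr g hτF] at hvles
    have hle : g σ ≤ g τ := hvles
    have hcomp : InitSeg (σ.erase (σ.min' hσne)) τ ∨ InitSeg τ (σ.erase (σ.min' hσne)) := by
      rcases hcond with ⟨h1, _⟩ | ⟨_, h2⟩
      · exact Or.inl h1
      · exact h2
    exact hbadg σ hσF τ hτF ⟨hσne, hτne, hlt, hcomp⟩ hle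
  · -- σ ∈ F, τ ∉ F : τ moves
    rw [Gc_F Fr g hσF, Gc_T Fr g hτF hτT] at hvles
    have hvles' : ∃ j, Vdot.vles (Vdot.up (g σ)) (Gc Fr g (insert (chEnum Fr τ j) τ)) := hvles
    obtain ⟨j, hj⟩ := hvles'
    have hm := chEnum_spec Fr τ j
    have hτ'T := tree_ext Fr hτT hτF hm.1 hm.2
    have hτ'ne : (insert (chEnum Fr τ j) τ).Nonempty := Finset.insert_nonempty _ _
    rcases hcond with ⟨hA1, hA2⟩ | ⟨hBF, _⟩
    · refine IH2 _ (muF_lt Fr hτT hτF j) σ _ rfl rfl hσT hτ'T hσne hτ'ne ?_ ?_ ?_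
      · rw [min'_insert_of_lt hm.2 hτne]; exact hlt
      · left
        refine ⟨initSeg_trans hA1 (initSeg_insert hm.2), ?_⟩
        intro heq
        have hc1 : (σ.erase (σ.min' hσne)).card ≤ τ.card := Finset.card_le_card hA1.1
        have hc2 : (insert (chEnum Fr τ j) τ).card = τ.card + 1 :=
          Finset.card_insert_of_notMem (fun hc => absurd (hm.2 _ hc) (lt_irrefl _))
        rw [heq, hc2] at hc1
        omega
      · rw [Gc_F Fr g hσF]; exact hj
    · exact hτF hBF
  · -- σ ∉ F, τ ∈ F : σ moves
    rw [Gc_T Fr g hσF hσT, Gc_F Fr g hτF] at hvles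
    have hvles' : ∀ i, Vdot.vles (Gc Fr g (insert (chEnum Fr σ i) σ)) (Vdot.up (g τ)) := hvles
    by_cases hA : InitSeg (σ.erase (σ.min' hσne)) τ ∧ σ.erase (σ.min' hσne) ≠ τ
    · -- follow τ
      obtain ⟨m, hmτ, hmgt, hIS'⟩ := follow_step hσne hτne hlt hA.1 hA.2
      have hmU : m ∈ Fr.union := ⟨τ, hτF, hmτ⟩
      obtain ⟨k, hk⟩ := chEnum_surj Fr σ hmU hmgt
      have hiv := hvles' k
      rw [hk] at hiv
      have hσ'T : insert m σ ∈ Tset Fr := tree_ext Fr hσT hσF hmU hmgt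
      have hσ'ne : (insert m σ).Nonempty := Finset.insert_nonempty _ _
      refine IH1 _ (by rw [← hk]; exact muF_lt Fr hσT hσF k) _ (insert m σ) τ rfl rfl
        hσ'T hτT hσ'ne hτne ?_ ?_ ?_
      · rw [min'_insert_of_lt hmgt hσne]; exact hlt
      · right
        refine ⟨hτF, Or.inl ?_⟩
        rw [erase_min_insert hσne hmgt]
        exact hIS'
      · rw [Gc_F Fr g hτF]; exact hiv
    · -- σ is already past τ
      have hor : InitSeg τ (σ.erase (σ.min' hσne)) ∨ σ.erase (σ.min' hσne) = τ := by
        rcases hcond with ⟨h1, h2⟩ | ⟨_, hor2⟩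
        · exact absurd ⟨h1, h2⟩ hA
        · rcases hor2 with h1 | h1
          · by_cases heq : σ.erase (σ.min' hσne) = τ
            · exact Or.inr heq
            · exact absurd ⟨h1, heq⟩ hA
          · exact Or.inl h1
      have hm := chEnum_spec Fr σ 0
      have hiv := hvles' 0
      have hσ'T : insert (chEnum Fr σ 0) σ ∈ Tset Fr := tree_ext Fr hσT hσF hm.1 hm.2
      have hσ'ne : (insert (chEnum Fr σ 0) σ).Nonempty := Finset.insert_nonempty _ _
      have hmgtb : ∀ a ∈ σ.erase (σ.min' hσne), a < chEnum Fr σ 0 :=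
        fun a ha => hm.2 a (Finset.mem_of_mem_erase ha)
      refine IH1 _ (muF_lt Fr hσT hσF 0) _ (insert (chEnum Fr σ 0) σ) τ rfl rfl
        hσ'T hτT hσ'ne hτne ?_ ?_ ?_
      · rw [min'_insert_of_lt hm.2 hσne]; exact hlt
      · right
        refine ⟨hτF, Or.inr ?_⟩
        rw [erase_min_insert hσne hm.2]
        rcases hor with h1 | h1
        · exact initSeg_trans h1 (initSeg_insert hmgtb)
        · rw [← h1]
          exact initSeg_insert hmgtb
      · rw [Gc_F Fr g hτF]; exact hiv
  · -- σ ∉ F, τ ∉ F : both move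
    rw [Gc_T Fr g hσF hσT, Gc_T Fr g hτF hτT] at hvles
    have hvles' : ∀ i, ∃ j, Vdot.vles (Gc Fr g (insert (chEnum Fr σ i) σ))
        (Gc Fr g (insert (chEnum Fr τ j) τ)) := hvles
    rcases hcond with ⟨hA1, hA2⟩ | ⟨hBF, _⟩
    · obtain ⟨m, hmτ, hmgt, hIS'⟩ := follow_step hσne hτne hlt hA1 hA2
      have hmU : m ∈ Fr.union := Tset_subset_union Fr hτT m hmτ
      obtain ⟨k, hk⟩ := chEnum_surj Fr σ hmU hmgt
      obtain ⟨j, hj⟩ := hvles' k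
      rw [hk] at hj
      have hm' := chEnum_spec Fr τ j
      have hσ'T : insert m σ ∈ Tset Fr := tree_ext Fr hσT hσF hmU hmgt
      have hτ'T := tree_ext Fr hτT hτF hm'.1 hm'.2
      refine IH1 _ (by rw [← hk]; exact muF_lt Fr hσT hσF k) _ (insert m σ)
        (insert (chEnum Fr τ j) τ) rfl rfl hσ'T hτ'T (Finset.insert_nonempty _ _)
        (Finset.insert_nonempty _ _) ?_ ?_ hj
      · rw [min'_insert_of_lt hmgt hσne, min'_insert_of_lt hm'.2 hτne]; exact hlt
      · left
        constructor
        · rw [erase_min_insert hσne hmgt]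
          exact initSeg_trans hIS' (initSeg_insert hm'.2)
        · rw [erase_min_insert hσne hmgt]
          intro heq
          have hc1 : (insert m (σ.erase (σ.min' hσne))).card ≤ τ.card :=
            Finset.card_le_card hIS'.1
          have hc2 : (insert (chEnum Fr τ j) τ).card = τ.card + 1 :=
            Finset.card_insert_of_notMem (fun hc => absurd (hm'.2 _ hc) (lt_irrefl _))
          rw [heq, hc2] at hc1
          omega
    · exact hτF hBF

end Dir1Main

/-! ### Direction 1: wrapper -/

section Dir1Wrap

open scoped Classical

variable {Q : Type u} [Preorder Q]

theorem dir1 (α : Ordinal.{0})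
    (H : ¬ ∃ x : ℕ → Vdot Q, (∀ i, (x i).memV α) ∧
      ∀ i, Vdot.vles (x (i + 1)) (x i) ∧ ¬ Vdot.vles (x i) (x (i + 1))) :
    IsAlphaWqo α Q := by
  constructor
  · rintro ⟨q, hq⟩
    exact H ⟨fun i => Vdot.up (q i), fun i => Or.inl ⟨q i, rfl⟩,
      fun i => ⟨(hq i).1, (hq i).2⟩⟩
  · intro Fr hrank g hbadg
    apply H
    set a : ℕ → ℕ := Nat.nth (· ∈ Fr.union) with ha
    have hamono : StrictMono a := Nat.nth_strictMono Fr.union_infinite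
    have haU : ∀ i, a i ∈ Fr.union := fun i => Nat.nth_mem_of_infinite Fr.union_infinite i
    refine ⟨fun i => Vdot.sup (fun k => Gc Fr g {a (i + k)}), ?_, ?_⟩
    · -- membership in V̇_α
      intro i
      right
      have hbound : ∀ k, (Gc Fr g {a (i + k)}).rkp ≤ Fr.rk ∅ := by
        intro k
        by_cases hF : ({a (i + k)} : Finset ℕ) ∈ Fr.F
        · rw [Gc_F Fr g hF, Vdot.rkp_up]
          exact zero_le ..
        · have hT := singleton_mem_Tset Fr (haU (i + k))
          refine le_trans (Gc_rkp Fr g _ _ rfl hT hF) (Order.add_one_le_of_lt ?_)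
          refine Fr.rk_strict ∅ _ ?_ (Tset_proper Fr hT hF) (initSeg_empty _)
            (fun h => (Finset.singleton_ne_empty _ h.symm))
          obtain ⟨ρ₀, hρ₀⟩ := Fr.infinite.nonempty
          exact ⟨ρ₀, hρ₀, initSeg_empty ρ₀, fun h => Fr.empty_not_mem (h ▸ hρ₀)⟩
      have hle : (Vdot.sup fun k => Gc Fr g {a (i + k)}).rk ≤ Fr.rk ∅ := by
        rw [Vdot.rk_sup]
        exact Ordinal.iSup_le hbound
      exact lt_of_le_of_lt hle hrank
    · intro i
      constructor
      · intro k
        refine ⟨k + 1, ?_⟩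
        show Vdot.vles (Gc Fr g {a (i + 1 + k)}) (Gc Fr g {a (i + (k + 1))})
        rw [show i + 1 + k = i + (k + 1) from by omega]
        exact Vdot.vles_refl _
      · intro hv
        have hv' : ∀ k, ∃ j, Vdot.vles (Gc Fr g {a (i + k)}) (Gc Fr g {a (i + 1 + j)}) := hv
        obtain ⟨j, hj⟩ := hv' 0
        refine main1 Fr g hbadg _ _ {a (i + 0)} {a (i + 1 + j)} rfl rfl
          (singleton_mem_Tset Fr (haU _)) (singleton_mem_Tset Fr (haU _))
          (Finset.singleton_nonempty _) (Finset.singleton_nonempty _) ?_ ?_ hj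
        · rw [Finset.min'_singleton, Finset.min'_singleton]
          exact hamono (by omega)
        · left
          rw [Finset.min'_singleton, Finset.erase_singleton]
          exact ⟨initSeg_empty _, fun h => Finset.singleton_ne_empty _ h.symm⟩

end Dir1Wrap

theorem statement16 {Q : Type u} [Preorder Q] (α : Ordinal.{0}) :
    ((¬ ∃ x : ℕ → Vdot Q, (∀ i, (x i).memV α) ∧
        ∀ i, Vdot.vles (x (i + 1)) (x i) ∧ ¬ Vdot.vles (x i) (x (i + 1))) →
      IsAlphaWqo α Q) ∧
    (¬ Order.IsSuccLimit α → IsAlphaWqo α Q →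
      ¬ ∃ x : ℕ → Vdot Q, (∀ i, (x i).memV α) ∧
        ∀ i, Vdot.vles (x (i + 1)) (x i) ∧ ¬ Vdot.vles (x i) (x (i + 1))) :=
  ⟨fun H => dir1 α H, fun hnl hwqo => dir2 α hnl hwqo⟩
end

section
/- Let Q be a quasi-order which is a wqo. Then the elements of V̇(Q) with finite support, ordered by ≲, form a wqo: for every sequence (x_i)_{i∈ℕ} of elements of V̇(Q) with each supp(x_i) finite, there exist i < j with x_i ≲ x_j. -/
open Ordinal

universe u

namespace S19

open Vdot

variable {Q : Type u} [Preorder Q]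

lemma vle_sup_sup (f g : ℕ → Vdot Q) :
    Vdot.vle (Vdot.sup f) (Vdot.sup g) ↔ ∀ i, ∃ j, Vdot.vle (f i) (g j) := Iff.rfl

lemma vle_up_iff (p : Q) (y : Vdot Q) : Vdot.vle (Vdot.up p) y ↔ Vdot.leUp p y := Iff.rfl

lemma leUp_iff (p : Q) (y : Vdot Q) : Vdot.leUp p y ↔ ∃ r ∈ Vdot.supp y, p ≤ r := by
  induction y with
  | up q => simp [Vdot.leUp, Vdot.supp]
  | sup g ih =>
      simp only [Vdot.leUp, Vdot.supp, Set.mem_iUnion]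
      constructor
      · rintro ⟨j, hj⟩
        rcases (ih j).mp hj with ⟨r, hr, hpr⟩
        exact ⟨r, ⟨j, hr⟩, hpr⟩
      · rintro ⟨r, ⟨j, hr⟩, hpr⟩
        exact ⟨j, (ih j).mpr ⟨r, hr, hpr⟩⟩

lemma rkp_lt (f : ℕ → Vdot Q) (n : ℕ) : Vdot.rkp (f n) < Vdot.rkp (Vdot.sup f) := by
  have h1 : Vdot.rkp (f n) ≤ ⨆ i, Vdot.rkp (f i) := le_ciSup (Ordinal.bddAbove_range _) n
  have : Vdot.rkp (Vdot.sup f) = (⨆ i, Vdot.rkp (f i)) + 1 := rfl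
  rw [this, Ordinal.add_one_eq_succ, Order.lt_succ_iff]
  exact h1

lemma supp_sub (f : ℕ → Vdot Q) (n : ℕ) : Vdot.supp (f n) ⊆ Vdot.supp (Vdot.sup f) := by
  have : Vdot.supp (Vdot.sup f) = ⋃ i, Vdot.supp (f i) := rfl
  rw [this]; exact Set.subset_iUnion (fun i => Vdot.supp (f i)) n

set_option linter.unusedSectionVars false

-- set-valued witness of `¬ A ≲ B`, if one exists
open Classical in
noncomputable def wit : Vdot Q → Vdot Q → Option (Vdot Q) :=
  fun A B => match A, B with
  | .sup f, .sup g =>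
      if h : ∃ i, ∀ j, ¬ Vdot.vle (f i) (g j) then
        (if h2 : ∃ f', f h.choose = Vdot.sup f' then some (f h.choose) else none)
      else none
  | _, _ => none

lemma wit_some {A B w : Vdot Q} (h : wit A B = some w) :
    ∃ f g, A = Vdot.sup f ∧ B = Vdot.sup g ∧ (∃ i, w = f i) ∧ (∀ j, ¬ Vdot.vle w (g j))
      ∧ ∃ f', w = Vdot.sup f' := by
  match A, B with
  | .up p, B => simp [wit] at h
  | .sup f, .up q => simp [wit] at h
  | .sup f, .sup g =>
      simp only [wit] at h
      split_ifs at h with h1 h2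
      · refine ⟨f, g, rfl, rfl, ⟨h1.choose, ?_⟩, ?_, ?_⟩
        · exact (Option.some_inj.mp h).symm
        · rw [← Option.some_inj.mp h] at *
          exact h1.choose_spec
        · rcases h2 with ⟨f', hf'⟩
          exact ⟨f', by rw [← Option.some_inj.mp h]; exact hf'⟩

lemma wit_none {f g : ℕ → Vdot Q} (hnv : ¬ Vdot.vle (Vdot.sup f) (Vdot.sup g))
    (h : wit (Vdot.sup f) (Vdot.sup g) = none) :
    ∃ q, (∃ i, f i = Vdot.up q) ∧ (∀ j, ¬ Vdot.vle (Vdot.up q) (g j)) := by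
  have h1 : ∃ i, ∀ j, ¬ Vdot.vle (f i) (g j) := by
    rw [vle_sup_sup] at hnv; push_neg at hnv; exact hnv
  simp only [wit] at h
  rw [dif_pos h1] at h
  split_ifs at h with h2
  · push_neg at h2
    match hfi : f h1.choose with
    | .up q =>
        refine ⟨q, ⟨h1.choose, hfi⟩, ?_⟩
        rw [← hfi]; exact h1.choose_spec
    | .sup f' => exact absurd hfi (h2 f')

end S19

-- PART2 (appended to part1 content for testing)
namespace S19
open Vdot
variable {Q : Type u} [Preorder Q]

noncomputable def vv (x : ℕ → Vdot Q) : List ℕ → Option (Vdot Q)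
  | [] => none
  | [a] => some (x a)
  | a :: b :: l =>
      Option.bind (vv x ((a :: b :: l).dropLast)) (fun A =>
        Option.bind (vv x (b :: l)) (fun B => wit A B))
  termination_by l => l.length
  decreasing_by
  · simpa using Nat.lt_succ_self _
  · simp

lemma vv_cons₂ (x : ℕ → Vdot Q) (a b : ℕ) (l : List ℕ) :
    vv x (a :: b :: l) =
      Option.bind (vv x ((a :: b :: l).dropLast)) (fun A =>
        Option.bind (vv x (b :: l)) (fun B => wit A B)) := by
  rw [vv]

/-- generic spec for words of length ≥ 2: in dropLast/tail form -/
lemma vv_spec (x : ℕ → Vdot Q) (l : List ℕ) (hl : 2 ≤ l.length) (w : Vdot Q)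
    (h : vv x l = some w) :
    ∃ A B, vv x l.dropLast = some A ∧ vv x l.tail = some B ∧ wit A B = some w := by
  match l with
  | a :: b :: t =>
      rw [vv_cons₂] at h
      rcases Option.bind_eq_some_iff.mp h with ⟨A, hA, h2⟩
      rcases Option.bind_eq_some_iff.mp h2 with ⟨B, hB, h3⟩
      exact ⟨A, B, hA, hB, h3⟩

lemma vv_isSup (x : ℕ → Vdot Q) (hsup : ∀ a, ∃ f, x a = Vdot.sup f) (l : List ℕ)
    (w : Vdot Q) (h : vv x l = some w) : ∃ f, w = Vdot.sup f := by
  match l with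
  | [] => simp [vv] at h
  | [a] =>
      rw [vv] at h
      rcases hsup a with ⟨f, hf⟩
      exact ⟨f, by rw [← Option.some_inj.mp h, hf]⟩
  | a :: b :: t =>
      rcases vv_spec x _ (by simp) w h with ⟨A, B, _, _, h3⟩
      rcases wit_some h3 with ⟨_, _, _, _, _, _, hf⟩
      exact hf

lemma vv_none_of_dropLast_none (x : ℕ → Vdot Q) (l : List ℕ) (hl : 2 ≤ l.length)
    (h : vv x l.dropLast = none) : vv x l = none := by
  match l with
  | a :: b :: t => rw [vv_cons₂, h]; rfl

/-- membership of the value in (the members of) the value at dropLast -/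
lemma vv_mem (x : ℕ → Vdot Q) (l : List ℕ) (hl : 2 ≤ l.length) (w : Vdot Q)
    (h : vv x l = some w) :
    ∃ A f, vv x l.dropLast = some A ∧ A = Vdot.sup f ∧ ∃ i, w = f i := by
  rcases vv_spec x l hl w h with ⟨A, B, hA, hB, h3⟩
  rcases wit_some h3 with ⟨f, g, hAf, _, hi, _, _⟩
  exact ⟨A, f, hA, hAf, hi⟩

lemma vv_rkp_lt (x : ℕ → Vdot Q) (l : List ℕ) (hl : 2 ≤ l.length) (w A : Vdot Q)
    (h : vv x l = some w) (hA : vv x l.dropLast = some A) : Vdot.rkp w < Vdot.rkp A := by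
  rcases vv_mem x l hl w h with ⟨A', f, hA', hAf, i, hi⟩
  rw [hA'] at hA
  rw [← Option.some_inj.mp hA, hAf, hi]
  exact rkp_lt f i

lemma vv_supp_sub (x : ℕ → Vdot Q) (l : List ℕ) (hl : 2 ≤ l.length) (w A : Vdot Q)
    (h : vv x l = some w) (hA : vv x l.dropLast = some A) : Vdot.supp w ⊆ Vdot.supp A := by
  rcases vv_mem x l hl w h with ⟨A', f, hA', hAf, i, hi⟩
  rw [hA'] at hA
  rw [← Option.some_inj.mp hA, hAf, hi]
  exact supp_sub f i

/-- the key invariant: at every node with both components defined, the comparison fails -/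
lemma vv_inv (x : ℕ → Vdot Q) (hsup : ∀ a, ∃ f, x a = Vdot.sup f)
    (hbad : ∀ a b, a < b → ¬ Vdot.vle (x a) (x b)) (l : List ℕ)
    (hpw : l.Pairwise (· < ·)) (hl : 2 ≤ l.length) (A B : Vdot Q)
    (hA : vv x l.dropLast = some A) (hB : vv x l.tail = some B) : ¬ Vdot.vle A B := by
  match l with
  | [a, b] =>
      simp only [List.dropLast, List.tail, vv] at hA hB
      rw [← Option.some_inj.mp hA, ← Option.some_inj.mp hB]
      exact hbad a b (by simpa using hpw)
  | a :: b :: c :: t =>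
      -- dropLast l = a :: b :: (c::t).dropLast  ; tail l = b :: c :: t
      have hdl : (a :: b :: c :: t).dropLast = a :: b :: (c :: t).dropLast := by
        simp
      rw [hdl] at hA
      rcases vv_spec x _ (by simp) A hA with ⟨A₁, B₁, hA₁, hB₁, hw₁⟩
      rcases wit_some hw₁ with ⟨f₁, g₁, _, hBg₁, _, hunm, _⟩
      -- B from tail
      have hB' : vv x (b :: c :: t) = some B := hB
      rcases vv_spec x _ (by simp) B hB' with ⟨A₂, B₂, hA₂, hB₂, hw₂⟩
      rcases wit_some hw₂ with ⟨f₂, g₂, hAf₂, _, ⟨i, hi⟩, _, _⟩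
      -- tail (dropLast l) = dropLast (tail l)
      have hcomm : (a :: b :: (c :: t).dropLast).tail = (b :: c :: t).dropLast := by
        simp
      rw [hcomm] at hB₁
      rw [hA₂] at hB₁
      have : A₂ = B₁ := Option.some_inj.mp hB₁
      rw [this, hBg₁] at hAf₂
      have hg : g₁ = f₂ := Vdot.sup.inj hAf₂
      rw [hi, ← hg]
      exact hunm i

lemma vv_deathdata (x : ℕ → Vdot Q) (hsup : ∀ a, ∃ f, x a = Vdot.sup f)
    (hbad : ∀ a b, a < b → ¬ Vdot.vle (x a) (x b)) (l : List ℕ)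
    (hpw : l.Pairwise (· < ·)) (hl : 2 ≤ l.length) (A B : Vdot Q)
    (hA : vv x l.dropLast = some A) (hB : vv x l.tail = some B) (hdead : vv x l = none) :
    ∃ q, q ∈ Vdot.supp A ∧ ∀ r ∈ Vdot.supp B, ¬ q ≤ r := by
  rcases vv_isSup x hsup _ _ hA with ⟨f, hAf⟩
  rcases vv_isSup x hsup _ _ hB with ⟨g, hBg⟩
  have hnv : ¬ Vdot.vle A B := vv_inv x hsup hbad l hpw hl A B hA hB
  have hwit : wit A B = none := by
    match l with
    | a :: b :: t =>
        rw [vv_cons₂] at hdead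
        have hB2 : vv x (b :: t) = some B := hB
        rw [hA, hB2] at hdead
        simpa using hdead
  rw [hAf, hBg] at hwit hnv
  rcases wit_none hnv hwit with ⟨q, ⟨i, hfi⟩, hq⟩
  refine ⟨q, ?_, ?_⟩
  · rw [hAf]
    have : q ∈ Vdot.supp (f i) := by rw [hfi]; exact rfl
    exact supp_sub f i this
  · intro r hr
    rw [hBg] at hr
    have : Vdot.supp (Vdot.sup g) = ⋃ j, Vdot.supp (g j) := rfl
    rw [this] at hr
    rcases Set.mem_iUnion.mp hr with ⟨j, hj⟩
    intro hqr
    exact hq j ((vle_up_iff q (g j)).mpr ((leUp_iff q (g j)).mpr ⟨r, hj, hqr⟩))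

lemma vv_supp_head (x : ℕ → Vdot Q) : ∀ (n : ℕ) (a : ℕ) (l : List ℕ) (w : Vdot Q),
    l.length = n → vv x (a :: l) = some w → Vdot.supp w ⊆ Vdot.supp (x a) := by
  intro n
  induction n using Nat.strong_induction_on with
  | _ n IH =>
      intro a l w hn h
      match l with
      | [] =>
          rw [vv] at h
          rw [← Option.some_inj.mp h]
      | b :: t =>
          rcases vv_mem x _ (by simp) w h with ⟨A, f, hA, hAf, i, hi⟩
          have hdl : (a :: b :: t).dropLast = a :: (b :: t).dropLast := by simp
          rw [hdl] at hA
          have hlen : (b :: t).dropLast.length < n := by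
            simp at hn ⊢; omega
          have h1 : Vdot.supp A ⊆ Vdot.supp (x a) :=
            IH _ hlen a _ A rfl hA
          refine subset_trans ?_ h1
          rw [hAf, hi]
          exact supp_sub f i

end S19
-- PART 3: paths and first deaths
namespace S19
open Vdot
variable {Q : Type u} [Preorder Q]

def pref (f : ℕ → ℕ) (m : ℕ) : List ℕ := (List.range (m+1)).map f

lemma pref_succ (f : ℕ → ℕ) (m : ℕ) : pref f (m+1) = pref f m ++ [f (m+1)] := by
  simp [pref, List.range_succ]

lemma pref_dropLast (f : ℕ → ℕ) (m : ℕ) : (pref f (m+1)).dropLast = pref f m := by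
  rw [pref_succ, List.dropLast_concat]

lemma pref_length (f : ℕ → ℕ) (m : ℕ) : (pref f m).length = m + 1 := by simp [pref]

lemma pref_ne_nil (f : ℕ → ℕ) (m : ℕ) : pref f m ≠ [] := by
  intro h
  have := pref_length f m
  rw [h] at this
  simp at this

lemma pref_zero (f : ℕ → ℕ) : pref f 0 = [f 0] := by
  have : List.range 1 = [0] := rfl
  simp [pref, this]

lemma pref_cons (f : ℕ → ℕ) (m : ℕ) :
    pref f m = f 0 :: (List.range m).map (fun i => f (i+1)) := by
  simp [pref, List.range_succ_eq_map, List.map_map]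

lemma pref_tail (f : ℕ → ℕ) (m : ℕ) :
    (pref f (m+1)).tail = pref (fun n => f (n+1)) m := by
  rw [pref_cons]
  simp [pref]

lemma pref_pairwise {f : ℕ → ℕ} (hf : StrictMono f) (m : ℕ) :
    (pref f m).Pairwise (· < ·) := by
  refine List.Pairwise.map f (fun a b h => hf h) ?_
  exact List.pairwise_lt_range

lemma pref_mem {f : ℕ → ℕ} {m n : ℕ} (h : n ∈ pref f m) : ∃ i, n = f i := by
  simp [pref] at h
  rcases h with ⟨i, _, hi⟩
  exact ⟨i, hi.symm⟩

lemma exists_path_death (x : ℕ → Vdot Q) (f : ℕ → ℕ) :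
    ∃ m, vv x (pref f m) = none := by
  by_contra h
  push_neg at h
  have hW : ∀ m, ∃ w, vv x (pref f m) = some w := by
    intro m
    rcases Option.ne_none_iff_exists.mp (h m) with ⟨w, hw⟩
    exact ⟨w, hw.symm⟩
  choose W hWs using hW
  have hdesc : ∀ m, Vdot.rkp (W (m+1)) < Vdot.rkp (W m) := by
    intro m
    refine vv_rkp_lt x (pref f (m+1)) ?_ (W (m+1)) (W m) (hWs (m+1)) ?_
    · rw [pref_length]; omega
    · rw [pref_dropLast]; exact hWs m
  exact (RelEmbedding.natGT (fun m => Vdot.rkp (W m)) hdesc).not_wellFounded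
    Ordinal.lt_wf

/-- index of the first death along a path -/
noncomputable def dIdx (x : ℕ → Vdot Q) (f : ℕ → ℕ) : ℕ :=
  sInf {m | vv x (pref f m) = none}

lemma dIdx_dead (x : ℕ → Vdot Q) (f : ℕ → ℕ) : vv x (pref f (dIdx x f)) = none :=
  Nat.sInf_mem (exists_path_death x f)

lemma dIdx_alive (x : ℕ → Vdot Q) (f : ℕ → ℕ) {k : ℕ} (hk : k < dIdx x f) :
    ∃ w, vv x (pref f k) = some w := by
  have := Nat.notMem_of_lt_sInf hk
  simp only [Set.mem_setOf_eq] at this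
  rcases Option.ne_none_iff_exists.mp this with ⟨w, hw⟩
  exact ⟨w, hw.symm⟩

lemma dIdx_pos (x : ℕ → Vdot Q) (f : ℕ → ℕ) : 1 ≤ dIdx x f := by
  by_contra h
  have h0 : dIdx x f = 0 := by omega
  have := dIdx_dead x f
  rw [h0, pref_zero] at this
  simp [vv] at this

/-- supports decrease along alive prefixes of a path -/
lemma path_supp_chain (x : ℕ → Vdot Q) (f : ℕ → ℕ) {m n : ℕ} (hmn : m ≤ n)
    {w w' : Vdot Q} (h : vv x (pref f m) = some w) (h' : vv x (pref f n) = some w') :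
    Vdot.supp w' ⊆ Vdot.supp w := by
  induction n generalizing w' with
  | zero =>
      have : m = 0 := by omega
      rw [this] at h
      rw [h'] at h
      rw [Option.some_inj.mp h]
  | succ n IH =>
      rcases Nat.lt_or_ge m (n+1) with hlt | hge
      · have hmn' : m ≤ n := by omega
        have hA : ∃ A, vv x (pref f n) = some A := by
          rcases vv_spec x (pref f (n+1)) (by rw [pref_length]; omega) w' h' with ⟨A, B, hA, _, _⟩
          rw [pref_dropLast] at hA
          exact ⟨A, hA⟩
        rcases hA with ⟨A, hA⟩
        have h1 : Vdot.supp w' ⊆ Vdot.supp A := by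
          refine vv_supp_sub x (pref f (n+1)) (by rw [pref_length]; omega) w' A h' ?_
          rw [pref_dropLast]; exact hA
        exact subset_trans h1 (IH hmn' hA)
      · have : m = n + 1 := by omega
        rw [this] at h
        rw [h'] at h
        rw [Option.some_inj.mp h]

end S19
-- PART 4: the Galvin-style engine
namespace S19

section Engine

variable (alv : List ℕ → Prop) (μ : List ℕ → Ordinal.{0})

/-- a minimal dead node -/
def death (l : List ℕ) : Prop := ¬ alv l ∧ alv l.dropLast

variable (hpre : ∀ l b, alv (l ++ [b]) → alv l)
  (hdec : ∀ l b, alv (l ++ [b]) → μ (l ++ [b]) < μ l)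

include hpre in
lemma alv_append : ∀ (u l : List ℕ), alv (l ++ u) → alv l := by
  intro u
  induction u using List.reverseRecOn with
  | nil => intro l h; simpa using h
  | append_singleton us b IH =>
      intro l h
      rw [← List.append_assoc] at h
      exact IH l (hpre _ b h)

include hpre in
lemma nodeath (w u : List ℕ) (hnal : ¬ alv w) (hu : u ≠ []) : ¬ death alv (w ++ u) := by
  rintro ⟨h1, h2⟩
  rw [List.dropLast_append_of_ne_nil hu] at h2
  exact hnal (alv_append alv hpre _ _ h2)

lemma enum_infinite {S : Set ℕ} (h : S.Infinite) : ∃ f : ℕ → ℕ, StrictMono f ∧ ∀ n, f n ∈ S := by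
  have := h.to_subtype
  exact ⟨fun n => (Nat.Subtype.orderIsoOfNat S n : ℕ), fun a b hab =>
    (Nat.Subtype.orderIsoOfNat S).strictMono hab, fun n => (Nat.Subtype.orderIsoOfNat S n).2⟩

include hpre hdec in
lemma find_death (w : List ℕ) (halv : alv w) (T : Set ℕ) (hT : T.Infinite) :
    ∃ u, u ≠ [] ∧ u.Pairwise (· < ·) ∧ (∀ n ∈ u, n ∈ T) ∧ death alv (w ++ u) := by
  obtain ⟨f, hf, hfT⟩ := enum_infinite hT
  have hne : {m | ¬ alv (w ++ pref f m)}.Nonempty := by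
    by_contra h
    push_neg at h
    simp only [Set.not_nonempty_iff_eq_empty, Set.eq_empty_iff_forall_notMem,
      Set.mem_setOf_eq, not_not] at h
    have hd : ∀ m, μ (w ++ pref f (m+1)) < μ (w ++ pref f m) := by
      intro m
      have : w ++ pref f (m+1) = (w ++ pref f m) ++ [f (m+1)] := by
        rw [pref_succ, List.append_assoc]
      rw [this]
      exact hdec _ _ (by rw [← this]; exact h (m+1))
    exact (RelEmbedding.natGT (fun m => μ (w ++ pref f m)) hd).not_wellFounded
      Ordinal.lt_wf
  set m0 := sInf {m | ¬ alv (w ++ pref f m)} with hm0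
  have hdead : ¬ alv (w ++ pref f m0) := Nat.sInf_mem hne
  have hlive : ∀ k < m0, alv (w ++ pref f k) := by
    intro k hk
    have := Nat.notMem_of_lt_sInf hk
    simpa using this
  refine ⟨pref f m0, pref_ne_nil f m0, pref_pairwise hf m0, ?_, hdead, ?_⟩
  · intro n hn
    rcases pref_mem hn with ⟨i, hi⟩
    rw [hi]; exact hfT i
  · match hm : m0 with
    | 0 =>
        rw [pref_zero, List.dropLast_concat]
        exact halv
    | k+1 =>
        have : (w ++ pref f (k+1)).dropLast = w ++ pref f k := by
          rw [pref_succ, ← List.append_assoc, List.dropLast_concat]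
        rw [this]
        exact hlive k (by omega)

include hpre hdec in
theorem engine {γ : Type*} (c : List ℕ → γ) (K : Set γ) (hK : K.Finite) :
    ∀ (o : Ordinal.{0}) (w : List ℕ), μ w < o → alv w → ∀ (S : Set ℕ), S.Infinite →
    (∀ u, u ≠ [] → u.Pairwise (· < ·) → (∀ n ∈ u, n ∈ S) → death alv (w ++ u) →
      c (w ++ u) ∈ K) →
    ∃ Y, Y ⊆ S ∧ Y.Infinite ∧ ∃ k, ∀ u, u ≠ [] → u.Pairwise (· < ·) → (∀ n ∈ u, n ∈ Y) →
      death alv (w ++ u) → c (w ++ u) = k := by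
  intro o
  induction o using Ordinal.induction with
  | h o IH =>
  intro w hμ halv S hS hcK
  -- the one-step (section) lemma
  have key : ∀ T : Set ℕ, T.Infinite → T ⊆ S →
      ∃ st : ℕ × Set ℕ × γ, st.1 ∈ T ∧ st.2.1 ⊆ T ∧ st.2.1.Infinite ∧
        (∀ n ∈ st.2.1, st.1 < n) ∧ st.2.2 ∈ K ∧
        (∀ u, u.Pairwise (· < ·) → (∀ n ∈ u, n ∈ st.2.1) → death alv ((w ++ [st.1]) ++ u) →
          c ((w ++ [st.1]) ++ u) = st.2.2) := by
    intro T hT hTS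
    set y := sInf T with hy
    have hyT : y ∈ T := Nat.sInf_mem hT.nonempty
    have hsetT : {n ∈ T | y < n} = T \ Set.Iic y := by
      ext n; simp only [Set.mem_setOf_eq, Set.mem_diff, Set.mem_Iic, not_le, Set.mem_sep_iff]
    have hT' : {n ∈ T | y < n}.Infinite := by
      rw [hsetT]; exact hT.diff (Set.finite_Iic y)
    have happcons : ∀ u : List ℕ, w ++ (y :: u) = (w ++ [y]) ++ u := by
      intro u; simp
    have hsubS : ∀ u : List ℕ, (∀ n ∈ u, n ∈ {n ∈ T | y < n}) → ∀ n ∈ (y :: u), n ∈ S := by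
      intro u hmem n hn
      rcases List.mem_cons.mp hn with h | h
      · rw [h]; exact hTS hyT
      · exact hTS (hmem n h).1
    have hpwcons : ∀ u : List ℕ, u.Pairwise (· < ·) → (∀ n ∈ u, n ∈ {n ∈ T | y < n}) →
        (y :: u).Pairwise (· < ·) := by
      intro u hpw hmem
      exact List.pairwise_cons.mpr ⟨fun b hb => (hmem b hb).2, hpw⟩
    by_cases halv' : alv (w ++ [y])
    · obtain ⟨Y, hYsub, hYinf, k, hom⟩ :=
        IH (μ w) hμ (w ++ [y]) (hdec w y halv') halv' {n ∈ T | y < n} hT'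
          (by
            intro u hu hpw hmem hd
            have := hcK (y :: u) (by simp) (hpwcons u hpw hmem) (hsubS u hmem)
              (by rw [happcons]; exact hd)
            rw [happcons] at this
            exact this)
      have hYT : Y ⊆ T := fun n hn => (hYsub hn).1
      have hYgt : ∀ n ∈ Y, y < n := fun n hn => (hYsub hn).2
      -- k ∈ K via a death found inside Y
      obtain ⟨u₀, hu₀ne, hu₀pw, hu₀mem, hu₀d⟩ := find_death alv μ hpre hdec (w ++ [y]) halv' Y hYinf
      have hkc : c ((w ++ [y]) ++ u₀) = k := hom u₀ hu₀ne hu₀pw hu₀mem hu₀d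
      have hkK : k ∈ K := by
        rw [← hkc, ← happcons]
        refine hcK (y :: u₀) (by simp) ?_ ?_ (by rw [happcons]; exact hu₀d)
        · exact List.pairwise_cons.mpr ⟨fun b hb => hYgt b (hu₀mem b hb), hu₀pw⟩
        · intro n hn
          rcases List.mem_cons.mp hn with h | h
          · rw [h]; exact hTS hyT
          · exact hTS (hYT (hu₀mem n h))
      refine ⟨(y, Y, k), hyT, hYT, hYinf, hYgt, hkK, ?_⟩
      intro u hpw hmem hd
      match u with
      | [] =>
          exfalso
          rw [List.append_nil] at hd
          exact hd.1 halv'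
      | a :: u' =>
          exact hom (a :: u') (by simp) hpw hmem hd
    · -- w ++ [y] is dead
      have hdth : death alv (w ++ [y]) := ⟨halv', by rw [List.dropLast_concat]; exact halv⟩
      refine ⟨(y, {n ∈ T | y < n}, c (w ++ [y])), hyT, fun n hn => hn.1, hT',
        fun n hn => hn.2, ?_, ?_⟩
      · exact hcK [y] (List.cons_ne_nil y []) (List.pairwise_singleton _ _) (by intro n hn; simp at hn; rw [hn]; exact hTS hyT) hdth
      · intro u hpw hmem hd
        match u with
        | [] => rw [List.append_nil]
        | a :: u' =>
            exfalso
            exact nodeath alv hpre (w ++ [y]) (a :: u') halv' (by simp) hd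
  -- build the fusion sequence
  obtain ⟨F, hF⟩ : ∃ F : (T : Set ℕ) → T.Infinite → T ⊆ S → ℕ × Set ℕ × γ,
      ∀ T hT hTS, (F T hT hTS).1 ∈ T ∧ (F T hT hTS).2.1 ⊆ T ∧ (F T hT hTS).2.1.Infinite ∧
        (∀ n ∈ (F T hT hTS).2.1, (F T hT hTS).1 < n) ∧ (F T hT hTS).2.2 ∈ K ∧
        (∀ u, u.Pairwise (· < ·) → (∀ n ∈ u, n ∈ (F T hT hTS).2.1) →
          death alv ((w ++ [(F T hT hTS).1]) ++ u) → c ((w ++ [(F T hT hTS).1]) ++ u)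
            = (F T hT hTS).2.2) :=
    ⟨fun T hT hTS => (key T hT hTS).choose, fun T hT hTS => (key T hT hTS).choose_spec⟩
  clear key
  set step : {T : Set ℕ // T.Infinite ∧ T ⊆ S} → {T : Set ℕ // T.Infinite ∧ T ⊆ S} :=
    fun p => ⟨(F p.1 p.2.1 p.2.2).2.1, (hF p.1 p.2.1 p.2.2).2.2.1,
      subset_trans (hF p.1 p.2.1 p.2.2).2.1 p.2.2⟩ with hstep
  set seq : ℕ → {T : Set ℕ // T.Infinite ∧ T ⊆ S} :=
    fun n => Nat.rec ⟨S, hS, subset_rfl⟩ (fun _ ih => step ih) n with hseq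
  have hseqsucc : ∀ n, seq (n+1) = step (seq n) := fun n => rfl
  set y : ℕ → ℕ := fun n => (F (seq n).1 (seq n).2.1 (seq n).2.2).1 with hy
  set T' : ℕ → Set ℕ := fun n => (F (seq n).1 (seq n).2.1 (seq n).2.2).2.1 with hT'
  set kk : ℕ → γ := fun n => (F (seq n).1 (seq n).2.1 (seq n).2.2).2.2 with hkk
  have hFn : ∀ n, y n ∈ (seq n).1 ∧ T' n ⊆ (seq n).1 ∧ (T' n).Infinite ∧
      (∀ m ∈ T' n, y n < m) ∧ kk n ∈ K ∧
      (∀ u, u.Pairwise (· < ·) → (∀ m ∈ u, m ∈ T' n) → death alv ((w ++ [y n]) ++ u) →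
        c ((w ++ [y n]) ++ u) = kk n) :=
    fun n => hF (seq n).1 (seq n).2.1 (seq n).2.2
  have hseqT : ∀ n, (seq (n+1)).1 = T' n := fun n => rfl
  have hymono : StrictMono y := by
    apply strictMono_nat_of_lt_succ
    intro n
    have h1 : y (n+1) ∈ (seq (n+1)).1 := (hFn (n+1)).1
    rw [hseqT n] at h1
    exact (hFn n).2.2.2.1 _ h1
  have hTdec : ∀ n, T' (n+1) ⊆ T' n := by
    intro n
    have := (hFn (n+1)).2.1
    rw [hseqT n] at this
    exact this
  have hTchain : ∀ m n, m ≤ n → T' n ⊆ T' m := by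
    intro m n hmn
    induction n with
    | zero => have : m = 0 := by omega
              rw [this]
    | succ n IH =>
        rcases Nat.lt_or_ge m (n+1) with h | h
        · exact subset_trans (hTdec n) (IH (by omega))
        · have : m = n + 1 := by omega
          rw [this]
  have hyT : ∀ m n, m < n → y n ∈ T' m := by
    intro m n hmn
    cases n with
    | zero => omega
    | succ n' =>
        have h1 : y (n'+1) ∈ (seq (n'+1)).1 := (hFn (n'+1)).1
        rw [hseqT n'] at h1
        exact hTchain m n' (by omega) h1
  have hyS : ∀ n, y n ∈ S := fun n => (seq n).2.2 ((hFn n).1)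
  -- pigeonhole on the colours
  have hrange : (Set.range kk).Finite := hK.subset (by rintro _ ⟨n, rfl⟩; exact (hFn n).2.2.2.2.1)
  obtain ⟨k₀, hk₀⟩ : ∃ k₀, (kk ⁻¹' {k₀}).Infinite := by
    by_contra hc
    push_neg at hc
    have hsub : (Set.univ : Set ℕ) ⊆ ⋃ k ∈ Set.range kk, kk ⁻¹' {k} := by
      intro n _; simp
    exact Set.infinite_univ ((hrange.biUnion (fun k _ => hc k)).subset hsub)
  refine ⟨y '' (kk ⁻¹' {k₀}), ?_, ?_, k₀, ?_⟩
  · rintro _ ⟨n, _, rfl⟩; exact hyS n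
  · exact hk₀.image (Set.injOn_of_injective hymono.injective)
  · intro u hu hpw hmem hd
    match u with
    | a :: u' =>
        obtain ⟨n, hn, hyn⟩ := hmem a (by simp)
        have hmem' : ∀ m ∈ u', m ∈ T' n := by
          intro m hm
          obtain ⟨n', hn', hyn'⟩ := hmem m (List.mem_cons_of_mem a hm)
          have ham : a < m := (List.pairwise_cons.mp hpw).1 m hm
          have hnn' : n < n' := by
            by_contra hcon
            push_neg at hcon
            have : y n' ≤ y n := hymono.le_iff_le.mpr hcon
            rw [hyn, hyn'] at this
            omega
          rw [← hyn']
          exact hyT n n' hnn'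
        have hd' : death alv ((w ++ [y n]) ++ u') := by
          have : (w ++ [y n]) ++ u' = w ++ (a :: u') := by rw [hyn]; simp
          rw [this]
          exact hd
        have := (hFn n).2.2.2.2.2 u' (List.pairwise_cons.mp hpw).2 hmem' hd'
        have heq : (w ++ [y n]) ++ u' = w ++ (a :: u') := by rw [hyn]; simp
        rw [heq] at this
        rw [this]
        exact hn

end Engine

end S19
-- PART 5: root harness with per-first-letter palettes
namespace S19
section Engine2

variable (alv : List ℕ → Prop) (μ : List ℕ → Ordinal.{0})
variable (hpre : ∀ l b, alv (l ++ [b]) → alv l)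
  (hdec : ∀ l b, alv (l ++ [b]) → μ (l ++ [b]) < μ l)

include hpre hdec in
theorem rootEngine {γ : Type*} [Inhabited γ] (halv1 : ∀ a, alv [a]) (c : List ℕ → γ)
    (Kp : ℕ → Set γ) (hKp : ∀ a, (Kp a).Finite)
    (hcK : ∀ a (u : List ℕ), (a :: u).Pairwise (· < ·) → death alv (a :: u) → c (a :: u) ∈ Kp a)
    (S : Set ℕ) (hS : S.Infinite) :
    ∃ Y, Y ⊆ S ∧ Y.Infinite ∧ ∃ G : ℕ → γ, ∀ a u, (a :: u).Pairwise (· < ·) →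
      (∀ n ∈ (a :: u), n ∈ Y) → death alv (a :: u) → c (a :: u) = G a := by
  have key : ∀ T : Set ℕ, T.Infinite → T ⊆ S →
      ∃ st : ℕ × Set ℕ × γ, st.1 ∈ T ∧ st.2.1 ⊆ T ∧ st.2.1.Infinite ∧
        (∀ n ∈ st.2.1, st.1 < n) ∧
        (∀ u, u.Pairwise (· < ·) → (∀ n ∈ u, n ∈ st.2.1) → death alv (st.1 :: u) →
          c (st.1 :: u) = st.2.2) := by
    intro T hT hTS
    set y := sInf T with hy
    have hyT : y ∈ T := Nat.sInf_mem hT.nonempty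
    have hsetT : {n ∈ T | y < n} = T \ Set.Iic y := by
      ext n; simp only [Set.mem_setOf_eq, Set.mem_diff, Set.mem_Iic, not_le, Set.mem_sep_iff]
    have hT' : {n ∈ T | y < n}.Infinite := by
      rw [hsetT]; exact hT.diff (Set.finite_Iic y)
    have hcons : ∀ u : List ℕ, [y] ++ u = y :: u := by intro u; simp
    obtain ⟨Y, hYsub, hYinf, k, hom⟩ :=
      engine alv μ hpre hdec c (Kp y) (hKp y) (μ [y] + 1) [y]
        (by rw [Ordinal.add_one_eq_succ]; exact Order.lt_succ _) (halv1 y) {n ∈ T | y < n} hT'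
        (by
          intro u hu hpw hmem hd
          rw [hcons] at hd ⊢
          refine hcK y u ?_ hd
          exact List.pairwise_cons.mpr ⟨fun b hb => (hmem b hb).2, hpw⟩)
    refine ⟨(y, Y, k), hyT, fun n hn => (hYsub hn).1, hYinf, fun n hn => (hYsub hn).2, ?_⟩
    intro u hpw hmem hd
    match u with
    | [] =>
        exfalso
        exact hd.1 (halv1 y)
    | a :: u' =>
        have := hom (a :: u') (by simp) hpw hmem (by rw [hcons]; exact hd)
        rw [hcons] at this
        exact this
  obtain ⟨F, hF⟩ : ∃ F : (T : Set ℕ) → T.Infinite → T ⊆ S → ℕ × Set ℕ × γ,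
      ∀ T hT hTS, (F T hT hTS).1 ∈ T ∧ (F T hT hTS).2.1 ⊆ T ∧ (F T hT hTS).2.1.Infinite ∧
        (∀ n ∈ (F T hT hTS).2.1, (F T hT hTS).1 < n) ∧
        (∀ u, u.Pairwise (· < ·) → (∀ n ∈ u, n ∈ (F T hT hTS).2.1) →
          death alv ((F T hT hTS).1 :: u) → c ((F T hT hTS).1 :: u) = (F T hT hTS).2.2) :=
    ⟨fun T hT hTS => (key T hT hTS).choose, fun T hT hTS => (key T hT hTS).choose_spec⟩
  clear key
  set step : {T : Set ℕ // T.Infinite ∧ T ⊆ S} → {T : Set ℕ // T.Infinite ∧ T ⊆ S} :=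
    fun p => ⟨(F p.1 p.2.1 p.2.2).2.1, (hF p.1 p.2.1 p.2.2).2.2.1,
      subset_trans (hF p.1 p.2.1 p.2.2).2.1 p.2.2⟩ with hstep
  set seq : ℕ → {T : Set ℕ // T.Infinite ∧ T ⊆ S} :=
    fun n => Nat.rec ⟨S, hS, subset_rfl⟩ (fun _ ih => step ih) n with hseq
  set y : ℕ → ℕ := fun n => (F (seq n).1 (seq n).2.1 (seq n).2.2).1 with hy
  set T' : ℕ → Set ℕ := fun n => (F (seq n).1 (seq n).2.1 (seq n).2.2).2.1 with hT'
  set kk : ℕ → γ := fun n => (F (seq n).1 (seq n).2.1 (seq n).2.2).2.2 with hkk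
  have hFn : ∀ n, y n ∈ (seq n).1 ∧ T' n ⊆ (seq n).1 ∧ (T' n).Infinite ∧
      (∀ m ∈ T' n, y n < m) ∧
      (∀ u, u.Pairwise (· < ·) → (∀ m ∈ u, m ∈ T' n) → death alv (y n :: u) →
        c (y n :: u) = kk n) :=
    fun n => hF (seq n).1 (seq n).2.1 (seq n).2.2
  have hseqT : ∀ n, (seq (n+1)).1 = T' n := fun n => rfl
  have hymono : StrictMono y := by
    apply strictMono_nat_of_lt_succ
    intro n
    have h1 : y (n+1) ∈ (seq (n+1)).1 := (hFn (n+1)).1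
    rw [hseqT n] at h1
    exact (hFn n).2.2.2.1 _ h1
  have hTdec : ∀ n, T' (n+1) ⊆ T' n := by
    intro n
    have := (hFn (n+1)).2.1
    rw [hseqT n] at this
    exact this
  have hTchain : ∀ m n, m ≤ n → T' n ⊆ T' m := by
    intro m n hmn
    induction n with
    | zero => have : m = 0 := by omega
              rw [this]
    | succ n IH =>
        rcases Nat.lt_or_ge m (n+1) with h | h
        · exact subset_trans (hTdec n) (IH (by omega))
        · have : m = n + 1 := by omega
          rw [this]
  have hyT : ∀ m n, m < n → y n ∈ T' m := by
    intro m n hmn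
    cases n with
    | zero => omega
    | succ n' =>
        have h1 : y (n'+1) ∈ (seq (n'+1)).1 := (hFn (n'+1)).1
        rw [hseqT n'] at h1
        exact hTchain m n' (by omega) h1
  have hyS : ∀ n, y n ∈ S := fun n => (seq n).2.2 ((hFn n).1)
  classical
  refine ⟨Set.range y, by rintro _ ⟨n, rfl⟩; exact hyS n,
    Set.infinite_range_of_injective hymono.injective,
    fun a => if h : ∃ n, y n = a then kk h.choose else default, ?_⟩
  intro a u hpw hmem hd
  obtain ⟨n, hyn⟩ := hmem a (by simp)
  have hex : ∃ m, y m = a := ⟨n, hyn⟩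
  show c (a :: u) = if h : ∃ m, y m = a then kk h.choose else default
  rw [dif_pos hex]
  have hchn : y hex.choose = a := hex.choose_spec
  have hnn : hex.choose = n := hymono.injective (by rw [hchn, hyn])
  rw [hnn]
  have hmem' : ∀ m ∈ u, m ∈ T' n := by
    intro m hm
    obtain ⟨n', hyn'⟩ := hmem m (List.mem_cons_of_mem a hm)
    have ham : a < m := (List.pairwise_cons.mp hpw).1 m hm
    have hnn' : n < n' := by
      by_contra hcon
      push_neg at hcon
      have : y n' ≤ y n := hymono.le_iff_le.mpr hcon
      rw [hyn, hyn'] at this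
      omega
    rw [← hyn']
    exact hyT n n' hnn'
  have := (hFn n).2.2.2.2 u (List.pairwise_cons.mp hpw).2 hmem' (by rw [hyn]; exact hd)
  rw [hyn] at this
  exact this

end Engine2
end S19
-- PART 6: instantiation and the main argument
namespace S19
open Vdot
variable {Q : Type u} [Preorder Q]

def alvx (x : ℕ → Vdot Q) : List ℕ → Prop := fun l => l = [] ∨ (vv x l).isSome

noncomputable def μx (x : ℕ → Vdot Q) : List ℕ → Ordinal.{0} := fun l =>
  if l = [] then (⨆ a, Vdot.rkp (x a)) + 1 else (vv x l).elim 0 Vdot.rkp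

lemma alvx_one (x : ℕ → Vdot Q) (a : ℕ) : alvx x [a] := by
  right
  rw [show vv x [a] = some (x a) from by rw [vv]]
  rfl

lemma alvx_pre (x : ℕ → Vdot Q) : ∀ l b, alvx x (l ++ [b]) → alvx x l := by
  intro l b h
  match l with
  | [] => left; rfl
  | c :: t =>
      rcases h with h | h
      · simp at h
      · right
        rcases Option.isSome_iff_exists.mp h with ⟨w, hw⟩
        have hlen : 2 ≤ ((c :: t) ++ [b]).length := by simp
        rcases vv_spec x _ hlen w hw with ⟨A, B, hA, _, _⟩
        rw [List.dropLast_concat] at hA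
        rw [hA]; rfl

lemma alvx_dec (x : ℕ → Vdot Q) : ∀ l b, alvx x (l ++ [b]) → μx x (l ++ [b]) < μx x l := by
  intro l b h
  have hne : l ++ [b] ≠ [] := by simp
  rcases h with h | h
  · exact absurd h hne
  rcases Option.isSome_iff_exists.mp h with ⟨w, hw⟩
  match l with
  | [] =>
      have hwb : w = x b := by
        rw [show ([] : List ℕ) ++ [b] = [b] from rfl] at hw
        rw [vv] at hw
        exact (Option.some_inj.mp hw).symm
      have h1 : μx x ([] ++ [b]) = Vdot.rkp (x b) := by
        simp only [μx, if_neg hne]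
        rw [hw, hwb]
        rfl
      have h2 : μx x [] = (⨆ a, Vdot.rkp (x a)) + 1 := by simp [μx]
      rw [h1, h2, Ordinal.add_one_eq_succ, Order.lt_succ_iff]
      exact le_ciSup (Ordinal.bddAbove_range _) b
  | c :: t =>
      have hlen : 2 ≤ ((c :: t) ++ [b]).length := by simp
      rcases vv_spec x _ hlen w hw with ⟨A, B, hA, _, _⟩
      rw [List.dropLast_concat] at hA
      have h1 : μx x ((c :: t) ++ [b]) = Vdot.rkp w := by
        simp only [μx, if_neg hne]
        rw [hw]; rfl
      have h2 : μx x (c :: t) = Vdot.rkp A := by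
        simp only [μx, if_neg (by simp : (c : ℕ) :: t ≠ [])]
        rw [hA]; rfl
      rw [h1, h2]
      refine vv_rkp_lt x ((c :: t) ++ [b]) hlen w A hw ?_
      rw [List.dropLast_concat]; exact hA

open Classical in
noncomputable def col (x : ℕ → Vdot Q) : List ℕ → Bool × Option Q := fun l =>
  ((vv x l.tail).isSome,
    if h : ∃ q, q ∈ (vv x l.dropLast).elim ∅ Vdot.supp ∧
        ∀ r ∈ (vv x l.tail).elim ∅ Vdot.supp, ¬ q ≤ r
    then some h.choose else none)

lemma col_fst (x : ℕ → Vdot Q) (l : List ℕ) : (col x l).1 = (vv x l.tail).isSome := rfl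

lemma col_snd_some (x : ℕ → Vdot Q) {l : List ℕ} {q : Q} (h : (col x l).2 = some q) :
    q ∈ (vv x l.dropLast).elim ∅ Vdot.supp ∧
      ∀ r ∈ (vv x l.tail).elim ∅ Vdot.supp, ¬ q ≤ r := by
  simp only [col] at h
  split_ifs at h with h1
  · rw [← Option.some_inj.mp h]
    exact h1.choose_spec

lemma col_snd_eq_some (x : ℕ → Vdot Q) (hsup : ∀ a, ∃ f, x a = Vdot.sup f)
    (hbad : ∀ a b, a < b → ¬ Vdot.vle (x a) (x b)) {l : List ℕ}
    (hpw : l.Pairwise (· < ·)) (hl : 2 ≤ l.length) {A B : Vdot Q}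
    (hA : vv x l.dropLast = some A) (hB : vv x l.tail = some B) (hdead : vv x l = none) :
    ∃ q, (col x l).2 = some q := by
  obtain ⟨q, hq1, hq2⟩ := vv_deathdata x hsup hbad l hpw hl A B hA hB hdead
  have hcond : ∃ q, q ∈ (vv x l.dropLast).elim ∅ Vdot.supp ∧
      ∀ r ∈ (vv x l.tail).elim ∅ Vdot.supp, ¬ q ≤ r := by
    refine ⟨q, ?_, ?_⟩
    · rw [hA]; exact hq1
    · rw [hB]; exact hq2
  simp only [col]
  rw [dif_pos hcond]
  exact ⟨hcond.choose, rfl⟩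

/-- the palette -/
def Kpal (x : ℕ → Vdot Q) (a : ℕ) : Set (Bool × Option Q) :=
  {p | p.2 = none ∨ ∃ q ∈ Vdot.supp (x a), p.2 = some q}

lemma Kpal_finite (x : ℕ → Vdot Q) (hfin : ∀ a, (Vdot.supp (x a)).Finite) (a : ℕ) :
    (Kpal x a).Finite := by
  have h1 : (insert none (some '' Vdot.supp (x a)) : Set (Option Q)).Finite :=
    ((hfin a).image some).insert none
  have h2 : ((Set.univ : Set Bool) ×ˢ (insert none (some '' Vdot.supp (x a)))).Finite :=
    Set.Finite.prod (Set.finite_univ) h1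
  refine h2.subset ?_
  rintro ⟨b, o⟩ hp
  rcases hp with h | ⟨q, hq, h⟩
  · exact ⟨Set.mem_univ b, by rw [h]; exact Set.mem_insert _ _⟩
  · exact ⟨Set.mem_univ b, by rw [h]; exact Set.mem_insert_of_mem _ ⟨q, hq, rfl⟩⟩

lemma col_mem_Kpal (x : ℕ → Vdot Q) (a : ℕ) (u : List ℕ)
    (hpw : (a :: u).Pairwise (· < ·)) (hd : death (alvx x) (a :: u)) :
    col x (a :: u) ∈ Kpal x a := by
  cases hcol : (col x (a :: u)).2 with
  | none => left; exact hcol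
  | some q =>
      right
      refine ⟨q, ?_, hcol⟩
      obtain ⟨hq1, _⟩ := col_snd_some x hcol
      match u with
      | [] =>
          exfalso
          exact hd.1 (alvx_one x a)
      | b :: u' =>
          have hdl : (a :: b :: u').dropLast = a :: (b :: u').dropLast := by simp
          rw [hdl] at hq1
          rcases hd.2 with h | h
          · rw [hdl] at h; simp at h
          · rw [hdl] at h
            rcases Option.isSome_iff_exists.mp h with ⟨w, hw⟩
            rw [hw] at hq1
            exact vv_supp_head x _ a _ w rfl hw hq1

/-- death of the first dead prefix along a path -/
lemma death_pref (x : ℕ → Vdot Q) (f : ℕ → ℕ) :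
    death (alvx x) (pref f (dIdx x f)) := by
  constructor
  · intro h
    rcases h with h | h
    · exact pref_ne_nil f _ h
    · rw [dIdx_dead x f] at h
      simp at h
  · obtain ⟨k, hk⟩ : ∃ k, dIdx x f = k + 1 := ⟨dIdx x f - 1, by have := dIdx_pos x f; omega⟩
    rw [hk, pref_dropLast]
    right
    obtain ⟨w, hw⟩ := dIdx_alive x f (by omega : k < dIdx x f)
    rw [hw]; rfl

end S19
-- PART 7: main argument
namespace S19
open Vdot
variable {Q : Type u} [Preorder Q]

lemma path_alive_anti (x : ℕ → Vdot Q) (f : ℕ → ℕ) : ∀ {m n : ℕ}, m ≤ n → ∀ {w : Vdot Q},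
    vv x (pref f n) = some w → ∃ w', vv x (pref f m) = some w' := by
  intro m n
  induction n with
  | zero =>
      intro hmn w h
      have : m = 0 := by omega
      rw [this]
      exact ⟨w, h⟩
  | succ n IH =>
      intro hmn w h
      rcases Nat.lt_or_ge m (n+1) with hlt | hge
      · rcases vv_spec x (pref f (n+1)) (by rw [pref_length]; omega) w h with ⟨A, B, hA, _, _⟩
        rw [pref_dropLast] at hA
        exact IH (by omega) hA
      · have : m = n + 1 := by omega
        rw [this]
        exact ⟨w, h⟩

lemma vdot_nonempty (v : Vdot Q) : Nonempty Q := by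
  induction v with
  | up q => exact ⟨q⟩
  | sup f ih => exact ih 0

theorem main (x : ℕ → Vdot Q) (hsup : ∀ a, ∃ f, x a = Vdot.sup f)
    (hbad : ∀ a b, a < b → ¬ Vdot.vle (x a) (x b))
    (hfin : ∀ a, (Vdot.supp (x a)).Finite)
    (hQ : ¬ ∃ g : ℕ → Q, ∀ i j, i < j → ¬ g i ≤ g j) : False := by
  have hck : ∀ a (u : List ℕ), (a :: u).Pairwise (· < ·) → death (alvx x) (a :: u) →
      col x (a :: u) ∈ Kpal x a := fun a u hpw hd => col_mem_Kpal x a u hpw hd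
  obtain ⟨Y, hYsub, hYinf, G, hG⟩ :=
    rootEngine (alvx x) (μx x) (alvx_pre x) (alvx_dec x) (alvx_one x) (col x)
      (Kpal x) (Kpal_finite x hfin) hck Set.univ Set.infinite_univ
  have hGpath : ∀ (f : ℕ → ℕ), StrictMono f → (∀ n, f n ∈ Y) →
      col x (pref f (dIdx x f)) = G (f 0) := by
    intro f hf hfY
    have hc := pref_cons f (dIdx x f)
    rw [hc]
    refine hG (f 0) _ ?_ ?_ ?_
    · rw [← hc]; exact pref_pairwise hf _
    · rw [← hc]
      intro n hn
      rcases pref_mem hn with ⟨i, hi⟩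
      rw [hi]; exact hfY i
    · rw [← hc]; exact death_pref x f
  by_cases hYf : {a ∈ Y | (G a).1 = false}.Infinite
  · -- tail-dead homogeneous: impossible by length descent
    have claim : ∀ m (f : ℕ → ℕ), StrictMono f → (∀ n, f n ∈ {a ∈ Y | (G a).1 = false}) →
        dIdx x f ≠ m := by
      intro m
      induction m using Nat.strong_induction_on with
      | _ m IH =>
        intro f hf hfm hdm
        have h0 : col x (pref f (dIdx x f)) = G (f 0) := hGpath f hf (fun n => (hfm n).1)
        have h1 : (vv x ((pref f (dIdx x f)).tail)).isSome = false := by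
          rw [← col_fst, h0]
          exact (hfm 0).2
        obtain ⟨k, hk⟩ : ∃ k, dIdx x f = k + 1 := ⟨dIdx x f - 1, by have := dIdx_pos x f; omega⟩
        rw [hk, pref_tail] at h1
        have h2 : vv x (pref (fun n => f (n+1)) k) = none := by
          cases h : vv x (pref (fun n => f (n+1)) k) with
          | none => rfl
          | some w => rw [h] at h1; simp at h1
        have h3 : dIdx x (fun n => f (n+1)) ≤ k := Nat.sInf_le h2
        have h4 : 1 ≤ dIdx x (fun n => f (n+1)) := dIdx_pos x _
        exact IH (dIdx x (fun n => f (n+1))) (by omega) (fun n => f (n+1))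
          (fun i j hij => hf (by omega)) (fun n => hfm (n+1)) rfl
    obtain ⟨f0, hf0, hf0m⟩ := enum_infinite hYf
    exact claim (dIdx x f0) f0 hf0 hf0m rfl
  · -- genuine homogeneous
    have hYt : {a ∈ Y | (G a).1 = true}.Infinite := by
      have hfin' : {a ∈ Y | (G a).1 = false}.Finite := Set.not_infinite.mp hYf
      refine ((hYinf.diff hfin').mono ?_)
      rintro a ⟨ha, hna⟩
      refine ⟨ha, ?_⟩
      by_contra hb
      exact hna ⟨ha, by revert hb; cases (G a).1 <;> simp⟩
    set Z := {a ∈ Y | (G a).1 = true} with hZdef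
    have pair : ∀ a b, a ∈ Z → b ∈ Z → a < b →
        ∃ qa qb, (G a).2 = some qa ∧ (G b).2 = some qb ∧ ¬ qa ≤ qb := by
      intro a b haZ hbZ hab
      have hZb : {n ∈ Z | b < n}.Infinite := by
        have hset : {n ∈ Z | b < n} = Z \ Set.Iic b := by
          ext n; simp only [Set.mem_setOf_eq, Set.mem_diff, Set.mem_Iic, not_le, Set.mem_sep_iff]
        rw [hset]
        exact hYt.diff (Set.finite_Iic b)
      obtain ⟨e2, he2, he2m⟩ := enum_infinite hZb
      set f : ℕ → ℕ := fun n => match n with | 0 => a | 1 => b | (k+2) => e2 k with hfdef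
      have hfmono : StrictMono f := by
        apply strictMono_nat_of_lt_succ
        intro n
        match n with
        | 0 => exact hab
        | 1 => exact (he2m 0).2
        | (k+2) => exact he2 (by omega : k < k + 1)
      have hfZ : ∀ n, f n ∈ Z := by
        intro n
        match n with
        | 0 => exact haZ
        | 1 => exact hbZ
        | (k+2) => exact (he2m k).1
      have hfY : ∀ n, f n ∈ Y := fun n => (hfZ n).1
      set m1 := dIdx x f with hm1
      obtain ⟨k1, hk1⟩ : ∃ k, m1 = k + 1 := ⟨m1 - 1, by have := dIdx_pos x f; omega⟩
      have hG1 : col x (pref f m1) = G a := hGpath f hfmono hfY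
      have htail1 : (vv x ((pref f m1).tail)).isSome = true := by
        rw [← col_fst, hG1]
        exact (hfZ 0).2
      obtain ⟨B1, hB1⟩ := Option.isSome_iff_exists.mp htail1
      obtain ⟨A1, hA1⟩ : ∃ A1, vv x ((pref f m1).dropLast) = some A1 := by
        rw [hk1, pref_dropLast]
        exact dIdx_alive x f (by omega)
      obtain ⟨qa, hqa⟩ := col_snd_eq_some x hsup hbad (pref_pairwise hfmono m1)
        (by rw [pref_length]; omega) hA1 hB1 (dIdx_dead x f)
      have hqa_prop := col_snd_some x hqa
      rw [hG1] at hqa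
      -- shifted path
      set f' : ℕ → ℕ := fun n => f (n+1) with hf'def
      have hf'mono : StrictMono f' := fun i j hij => hfmono (by omega)
      have hf'Z : ∀ n, f' n ∈ Z := fun n => hfZ (n+1)
      set m2 := dIdx x f' with hm2
      have htail_eq : (pref f m1).tail = pref f' k1 := by rw [hk1]; exact pref_tail f k1
      have halive_k1 : vv x (pref f' k1) = some B1 := by rw [← htail_eq]; exact hB1
      have hm2k : k1 < m2 := by
        by_contra hcon
        push_neg at hcon
        obtain ⟨w', hw'⟩ := path_alive_anti x f' hcon halive_k1
        rw [dIdx_dead x f'] at hw'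
        simp at hw'
      obtain ⟨k2, hk2⟩ : ∃ k, m2 = k + 1 := ⟨m2 - 1, by have := dIdx_pos x f'; omega⟩
      have hG2 : col x (pref f' m2) = G b := hGpath f' hf'mono (fun n => (hf'Z n).1)
      have htail2 : (vv x ((pref f' m2).tail)).isSome = true := by
        rw [← col_fst, hG2]
        exact (hf'Z 0).2
      obtain ⟨B2, hB2⟩ := Option.isSome_iff_exists.mp htail2
      obtain ⟨A2, hA2⟩ : ∃ A2, vv x ((pref f' m2).dropLast) = some A2 := by
        rw [hk2, pref_dropLast]
        exact dIdx_alive x f' (by omega)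
      obtain ⟨qb, hqb⟩ := col_snd_eq_some x hsup hbad (pref_pairwise hf'mono m2)
        (by rw [pref_length]; omega) hA2 hB2 (dIdx_dead x f')
      have hqb_prop := col_snd_some x hqb
      rw [hG2] at hqb
      refine ⟨qa, qb, hqa, hqb, ?_⟩
      -- qb ∈ supp A2 ⊆ supp B1, and qa avoids supp B1
      have hqb_mem : qb ∈ Vdot.supp A2 := by
        have := hqb_prop.1
        rw [hA2] at this
        exact this
      have hA2k2 : vv x (pref f' k2) = some A2 := by
        rw [← pref_dropLast f' k2, ← hk2]
        exact hA2
      have hchain : Vdot.supp A2 ⊆ Vdot.supp B1 :=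
        path_supp_chain x f' (by omega : k1 ≤ k2) halive_k1 hA2k2
      have hqa2 := hqa_prop.2 qb (by
        rw [hB1]
        exact hchain hqb_mem)
      exact hqa2
    -- conclude: a bad sequence in Q
    obtain ⟨e, he, hem⟩ := enum_infinite hYt
    have hQQ : Nonempty Q := vdot_nonempty (x 0)
    apply hQ
    refine ⟨fun n => ((G (e n)).2).getD hQQ.some, fun i j hij => ?_⟩
    obtain ⟨qa, qb, hqa, hqb, hno⟩ := pair (e i) (e j) (hem i) (hem j) (he hij)
    show ¬ ((G (e i)).2).getD hQQ.some ≤ ((G (e j)).2).getD hQQ.some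
    rw [hqa, hqb]
    simpa using hno

end S19

theorem statement19 {Q : Type u} [Preorder Q] (hQ : IsWqo Q)
    (x : ℕ → Vdot Q) (hfin : ∀ i, (Vdot.supp (x i)).Finite) :
    ∃ i j, i < j ∧ Vdot.vle (x i) (x j) := by
  by_contra H
  push_neg at H
  have hbad : ∀ i j, i < j → ¬ Vdot.vle (x i) (x j) := fun i j hij => H i j hij
  have hQ' : ¬ ∃ g : ℕ → Q, ∀ i j, i < j → ¬ g i ≤ g j := hQ
  by_cases hU : {i | ∃ q, x i = Vdot.up q}.Infinite
  · obtain ⟨e, he, heU⟩ := S19.enum_infinite hU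
    have hq : ∀ n, ∃ q, x (e n) = Vdot.up q := fun n => heU n
    choose qq hqq using hq
    apply hQ'
    refine ⟨qq, fun i j hij => ?_⟩
    have h1 := hbad (e i) (e j) (he hij)
    rw [hqq i, hqq j] at h1
    intro hle
    exact h1 hle
  · rw [Set.not_infinite] at hU
    obtain ⟨N, hN⟩ := hU.bddAbove
    set x' : ℕ → Vdot Q := fun i => x (N + 1 + i) with hx'
    have hsup : ∀ a, ∃ f, x' a = Vdot.sup f := by
      intro a
      cases hxa : x' a with
      | up q =>
          exfalso
          have hmem : N + 1 + a ∈ {i | ∃ q, x i = Vdot.up q} := ⟨q, hxa⟩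
          have := hN hmem
          omega
      | sup f => exact ⟨f, rfl⟩
    exact S19.main x' hsup (fun a b hab => hbad _ _ (by omega)) (fun a => hfin _) hQ'
end
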